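/- arXiv:1109.2091 — 5 statements merged into one kernel-verified Lean document; each statement's English description precedes it below -/
import Mathlib

section
/- A small quiver G is a finitely presentable object of the category Quiv of small quivers if and only if G is finite, i.e. G has finitely many vertices and finitely many arrows in total. -/
/-!
A small quiver `G` is a finitely presentable object of the category `Quiv` of small
quivers if and only if `G` is finite, i.e. `G` has finitely many vertices and finitely
many arrows in total.
-/

open CategoryTheory CategoryTheory.Limits

universe v u

/-- An object `X` of a category `C` is finitely presentable if the hom-functor
`Hom(X, -) : C ⥤ Type` preserves filtered colimits. -/
def IsFinitelyPresentable {C : Type u} [Category.{v} C] (X : C) : Prop :=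
  ∀ (J : Type v) [SmallCategory J] [IsFiltered J],
    PreservesColimitsOfShape J (coyoneda.obj (Opposite.op X))

namespace QuivFP
section Generic
variable {A B : Type*} [Quiver A] [Quiver B]
theorem pcongr_obj {u v : A ⥤q B} (h : u = v) (x : A) : u.obj x = v.obj x := by rw [h]
theorem pcongr_map {u v : A ⥤q B} (h : u = v) {x y : A} (f : x ⟶ y) :
    HEq (u.map f) (v.map f) := by subst h; rfl
theorem pext {u v : A ⥤q B} (hobj : ∀ x, u.obj x = v.obj x)
    (hmap : ∀ {x y : A} (f : x ⟶ y), HEq (u.map f) (v.map f)) : u = v := by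
  obtain ⟨uo, um⟩ := u
  obtain ⟨vo, vm⟩ := v
  have ho : uo = vo := funext hobj
  subst ho
  have hm : @um = @vm := by
    funext x y f
    exact eq_of_heq (hmap f)
  rw [hm]
def ptot (u : A ⥤q B) : (Σ x y : A, x ⟶ y) → Σ x y : B, x ⟶ y :=
  fun t => ⟨u.obj t.1, u.obj t.2.1, u.map t.2.2⟩
theorem ptot_id : ptot (𝟭q A) = id := rfl
theorem ptot_comp {C : Type*} [Quiver C] (u : A ⥤q B) (v : B ⥤q C) :
    ptot (u ⋙q v) = ptot v ∘ ptot u := rfl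
theorem sigma_mk_heq {a a' b b' : B} {f : a ⟶ b} {g : a' ⟶ b'}
    (h : (⟨a, b, f⟩ : Σ x y : B, x ⟶ y) = ⟨a', b', g⟩) : HEq f g := by
  obtain ⟨h1, h2⟩ := Sigma.mk.inj_iff.mp h
  subst h1
  obtain ⟨h3, h4⟩ := Sigma.mk.inj_iff.mp (eq_of_heq h2)
  subst h3
  exact h4
theorem sigma_cast {a a' b b' : B} (h1 : a = a') (h2 : b = b') (f : a ⟶ b) :
    (⟨a', b', Quiver.Hom.cast h1 h2 f⟩ : Σ x y : B, x ⟶ y) = ⟨a, b, f⟩ := by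
  subst h1; subst h2; rfl
theorem pext_tot {u v : A ⥤q B} (hobj : ∀ x, u.obj x = v.obj x)
    (htot : ∀ t, ptot u t = ptot v t) : u = v :=
  pext hobj fun {x y} f => sigma_mk_heq (htot ⟨x, y, f⟩)
theorem pcongr_tot {u v : A ⥤q B} (h : u = v) (t : Σ x y : A, x ⟶ y) :
    ptot u t = ptot v t := by rw [h]
theorem pmap_heq (u : A ⥤q B) {x y x' y' : A} (hx : x = x') (hy : y = y')
    {f : x ⟶ y} {g : x' ⟶ y'} (h : HEq f g) : HEq (u.map f) (u.map g) := by
  subst hx; subst hy; rw [eq_of_heq h]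
end Generic

/-- The vertex functor `Quiv ⥤ Type`. -/
def vtxF : Quiv.{u, u} ⥤ Type u where
  obj X := X
  map u := TypeCat.ofHom u.obj

/-- The total-arrow functor `Quiv ⥤ Type`. -/
def totF : Quiv.{u, u} ⥤ Type u where
  obj X := Σ x y : X, x ⟶ y
  map u := TypeCat.ofHom (ptot u)

section Colim

variable {J : Type u} [SmallCategory J] (F : J ⥤ Quiv.{u, u})

/-- Vertices of the colimit quiver. -/
noncomputable def CQ : Type u := colimit (F ⋙ vtxF)

/-- Total arrows of the colimit quiver. -/
noncomputable def CE : Type u := colimit (F ⋙ totF)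

/-- Source natural transformation. -/
def srcNat : (F ⋙ totF) ⟶ (F ⋙ vtxF) where
  app j := TypeCat.ofHom fun t => t.1
  naturality j k f := rfl

/-- Target natural transformation. -/
def tgtNat : (F ⋙ totF) ⟶ (F ⋙ vtxF) where
  app j := TypeCat.ofHom fun t => t.2.1
  naturality j k f := rfl

noncomputable def csrc : CE F → CQ F := fun e => colimMap (srcNat F) e
noncomputable def ctgt : CE F → CQ F := fun e => colimMap (tgtNat F) e

theorem csrc_ι (j : J) (t : (F ⋙ totF).obj j) :
    csrc F (colimit.ι (F ⋙ totF) j t) = colimit.ι (F ⋙ vtxF) j t.1 :=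
  ConcreteCategory.congr_hom (colimit.ι_map (srcNat F) j) t

theorem ctgt_ι (j : J) (t : (F ⋙ totF).obj j) :
    ctgt F (colimit.ι (F ⋙ totF) j t) = colimit.ι (F ⋙ vtxF) j t.2.1 :=
  ConcreteCategory.congr_hom (colimit.ι_map (tgtNat F) j) t

noncomputable instance : Quiver.{u} (CQ F) :=
  ⟨fun a b => { e : CE F // csrc F e = a ∧ ctgt F e = b }⟩

/-- The colimit quiver. -/
noncomputable def CQuiv : Quiv.{u, u} := Quiv.of (CQ F)

theorem csigma_ext {a b a' b' : CQ F} {f : a ⟶ b} {g : a' ⟶ b'} (h : f.val = g.val) :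
    (⟨a, b, f⟩ : Σ x y : CQ F, x ⟶ y) = ⟨a', b', g⟩ := by
  obtain ⟨e, rfl, rfl⟩ := f
  obtain ⟨e', rfl, rfl⟩ := g
  cases h
  rfl

theorem pext_toCQ {A : Type*} [Quiver A] {u v : A ⥤q CQ F}
    (hobj : ∀ x, u.obj x = v.obj x)
    (hval : ∀ {x y : A} (f : x ⟶ y), (u.map f).val = (v.map f).val) : u = v :=
  pext hobj fun {x y} f => sigma_mk_heq (csigma_ext F (hval f))

/-- The colimit cocone legs. -/
noncomputable def cι (j : J) : F.obj j ⟶ CQuiv F where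
  obj x := colimit.ι (F ⋙ vtxF) j x
  map {x y} e := ⟨colimit.ι (F ⋙ totF) j ⟨x, y, e⟩, csrc_ι F j ⟨x, y, e⟩, ctgt_ι F j ⟨x, y, e⟩⟩

/-- The colimit cocone. -/
noncomputable def ccocone : Cocone F where
  pt := CQuiv F
  ι :=
    { app := cι F
      naturality := fun j k f => by
        refine pext_toCQ F (fun x => ?_) (fun {x y} e => ?_)
        · exact colimit.w_apply (F ⋙ vtxF) f x
        · exact colimit.w_apply (F ⋙ totF) f (⟨x, y, e⟩ : Σ x y : F.obj j, x ⟶ y) }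

/-- Descend the vertex map. -/
noncomputable def dObj (s : Cocone F) : CQ F → (s.pt : Type u) :=
  fun x => colimit.desc (F ⋙ vtxF)
    { pt := s.pt
      ι :=
        { app := fun j => TypeCat.ofHom (s.ι.app j).obj
          naturality := fun j k f => by ext x; exact pcongr_obj (s.w f) x } } x

/-- Descend the total-arrow map. -/
noncomputable def dTot (s : Cocone F) : CE F → Σ x y : (s.pt : Type u), x ⟶ y :=
  fun x => colimit.desc (F ⋙ totF)
    { pt := Σ x y : (s.pt : Type u), x ⟶ y
      ι :=
        { app := fun j => TypeCat.ofHom (ptot (s.ι.app j))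
          naturality := fun j k f => by ext t; exact pcongr_tot (s.w f) t } } x

theorem dObj_ι (s : Cocone F) (j : J) (x : (F.obj j : Type u)) :
    dObj F s (colimit.ι (F ⋙ vtxF) j x) = (s.ι.app j).obj x :=
  Types.Colimit.ι_desc_apply (F ⋙ vtxF) _ j x

theorem dTot_ι (s : Cocone F) (j : J) (t : Σ x y : (F.obj j : Type u), x ⟶ y) :
    dTot F s (colimit.ι (F ⋙ totF) j t) = ptot (s.ι.app j) t :=
  Types.Colimit.ι_desc_apply (F ⋙ totF) _ j t

theorem dTot_src (s : Cocone F) (e : CE F) : (dTot F s e).1 = dObj F s (csrc F e) := by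
  obtain ⟨j, t, rfl⟩ := Types.jointly_surjective' (e : colimit (F ⋙ totF))
  erw [dTot_ι, csrc_ι, dObj_ι]
  rfl

theorem dTot_tgt (s : Cocone F) (e : CE F) : (dTot F s e).2.1 = dObj F s (ctgt F e) := by
  obtain ⟨j, t, rfl⟩ := Types.jointly_surjective' (e : colimit (F ⋙ totF))
  erw [dTot_ι, ctgt_ι, dObj_ι]
  rfl

/-- The descended prefunctor out of the colimit quiver. -/
noncomputable def descQ (s : Cocone F) : CQuiv F ⟶ s.pt where
  obj := dObj F s
  map {a b} e :=
    Quiver.Hom.cast (by rw [dTot_src, e.2.1]) (by rw [dTot_tgt, e.2.2]) (dTot F s e.1).2.2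

theorem cfac (s : Cocone F) (j : J) : cι F j ≫ descQ F s = s.ι.app j := by
  refine pext (fun x => dObj_ι F s j x) (fun {x y} e => ?_)
  show HEq ((descQ F s).map ((cι F j).map e)) ((s.ι.app j).map e)
  refine (Quiver.Hom.cast_heq _ _ _).trans ?_
  show HEq (dTot F s (colimit.ι (F ⋙ totF) j
    (⟨x, y, e⟩ : Σ x y : (F.obj j : Type u), x ⟶ y))).2.2 ((s.ι.app j).map e)
  rw [dTot_ι]
  exact HEq.rfl

theorem key_map (s : Cocone F) (m : CQuiv F ⟶ s.pt) (j : J)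
    (hm : cι F j ≫ m = s.ι.app j) {p q : (F.obj j : Type u)} (ar : p ⟶ q)
    {a b : CQ F} (f : a ⟶ b) (hf : f.val = colimit.ι (F ⋙ totF) j
      (⟨p, q, ar⟩ : Σ x y : (F.obj j : Type u), x ⟶ y)) :
    HEq (m.map f) ((s.ι.app j).map ar) := by
  have ha : a = (cι F j).obj p := by
    erw [← f.2.1, hf, csrc_ι]; rfl
  have hb : b = (cι F j).obj q := by
    erw [← f.2.2, hf, ctgt_ι]; rfl
  have hfg : HEq f ((cι F j).map ar) := sigma_mk_heq (csigma_ext F hf)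
  refine (pmap_heq m ha hb hfg).trans ?_
  exact pcongr_map hm ar

/-- The explicit cocone is a colimit cocone. -/
noncomputable def cIsColimit : IsColimit (ccocone F) where
  desc := descQ F
  fac := cfac F
  uniq s m hm := by
    refine pext (fun x => ?_) (fun {a b} f => ?_)
    · obtain ⟨j, y, rfl⟩ := Types.jointly_surjective' (x : colimit (F ⋙ vtxF))
      exact (pcongr_obj (hm j) y).trans (dObj_ι F s j y).symm
    · obtain ⟨j, t, ht⟩ := Types.jointly_surjective' (f.val : colimit (F ⋙ totF))
      obtain ⟨p, q, ar⟩ := t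
      exact (key_map F s m j (hm j) ar f ht.symm).trans
        (key_map F s (descQ F s) j (cfac F s j) ar f ht.symm).symm

end Colim

section Factor

variable {J : Type u} [SmallCategory J] [IsFiltered J] (F : J ⥤ Quiv.{u, u})

theorem surj_aux {G : Quiv.{u, u}} (hV : Finite G) (hA : Finite (Σ x y : G, x ⟶ y))
    (u : G ⟶ CQuiv F) : ∃ (S : J) (w : G ⟶ F.obj S), u = w ≫ cι F S := by
  classical
  haveI := Fintype.ofFinite (G : Type u)
  haveI := Fintype.ofFinite (Σ x y : (G : Type u), x ⟶ y)
  -- choose representatives for vertex images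
  have hx : ∀ v : (G : Type u), ∃ z : Σ j : J, (F.obj j : Type u),
      colimit.ι (F ⋙ vtxF) z.1 z.2 = u.obj v := by
    intro v
    obtain ⟨j, y, h⟩ := Types.jointly_surjective' (u.obj v : colimit (F ⋙ vtxF))
    exact ⟨⟨j, y⟩, h⟩
  choose X hX using hx
  -- choose representatives for arrow images
  have he : ∀ t : Σ x y : (G : Type u), x ⟶ y, ∃ z : Σ j : J, Σ p q : (F.obj j : Type u), p ⟶ q,
      colimit.ι (F ⋙ totF) z.1 z.2 = (u.map t.2.2).val := by
    intro t
    obtain ⟨j, y, h⟩ := Types.jointly_surjective' ((u.map t.2.2).val : colimit (F ⋙ totF))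
    exact ⟨⟨j, y⟩, h⟩
  choose E hE using he
  -- coherence of sources
  have hsrc : ∀ t : Σ x y : (G : Type u), x ⟶ y,
      colimit.ι (F ⋙ vtxF) (E t).1 (E t).2.1 = colimit.ι (F ⋙ vtxF) (X t.1).1 (X t.1).2 := by
    intro t
    calc @id (CQ F) (colimit.ι (F ⋙ vtxF) (E t).1 (E t).2.1)
        = csrc F (colimit.ι (F ⋙ totF) (E t).1 (E t).2) := (csrc_ι F (E t).1 (E t).2).symm
      _ = csrc F (u.map t.2.2).val := by rw [hE t]
      _ = @id (CQ F) (u.obj t.1) := (u.map t.2.2).2.1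
      _ = @id (CQ F) (colimit.ι (F ⋙ vtxF) (X t.1).1 (X t.1).2) := (hX t.1).symm
  have htgt : ∀ t : Σ x y : (G : Type u), x ⟶ y,
      colimit.ι (F ⋙ vtxF) (E t).1 (E t).2.2.1
        = colimit.ι (F ⋙ vtxF) (X t.2.1).1 (X t.2.1).2 := by
    intro t
    calc @id (CQ F) (colimit.ι (F ⋙ vtxF) (E t).1 (E t).2.2.1)
        = ctgt F (colimit.ι (F ⋙ totF) (E t).1 (E t).2) := (ctgt_ι F (E t).1 (E t).2).symm
      _ = ctgt F (u.map t.2.2).val := by rw [hE t]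
      _ = @id (CQ F) (u.obj t.2.1) := (u.map t.2.2).2.2
      _ = @id (CQ F) (colimit.ι (F ⋙ vtxF) (X t.2.1).1 (X t.2.1).2) := (hX t.2.1).symm
  choose K fK gK hK using fun t =>
    (Types.FilteredColimit.colimit_eq_iff (F ⋙ vtxF)).mp (hsrc t)
  choose L fL gL hL using fun t =>
    (Types.FilteredColimit.colimit_eq_iff (F ⋙ vtxF)).mp (htgt t)
  -- assemble a finite collection of objects and morphisms
  let O : Finset J := ((Finset.univ.image fun v => (X v).1) ∪
      (Finset.univ.image fun t => (E t).1)) ∪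
      ((Finset.univ.image K) ∪ (Finset.univ.image L))
  have mX : ∀ v, (X v).1 ∈ O := fun v =>
    Finset.mem_union_left _ (Finset.mem_union_left _
      (Finset.mem_image_of_mem _ (Finset.mem_univ v)))
  have mE : ∀ t, (E t).1 ∈ O := fun t =>
    Finset.mem_union_left _ (Finset.mem_union_right _
      (Finset.mem_image_of_mem _ (Finset.mem_univ t)))
  have mK : ∀ t, K t ∈ O := fun t =>
    Finset.mem_union_right _ (Finset.mem_union_left _
      (Finset.mem_image_of_mem _ (Finset.mem_univ t)))
  have mL : ∀ t, L t ∈ O := fun t =>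
    Finset.mem_union_right _ (Finset.mem_union_right _
      (Finset.mem_image_of_mem _ (Finset.mem_univ t)))
  let H : Finset (Σ' (A B : J) (_ : A ∈ O) (_ : B ∈ O), A ⟶ B) :=
    ((Finset.univ.image fun t =>
        (⟨(E t).1, K t, mE t, mK t, fK t⟩ : Σ' (A B : J) (_ : A ∈ O) (_ : B ∈ O), A ⟶ B)) ∪
      (Finset.univ.image fun t =>
        (⟨(X t.1).1, K t, mX t.1, mK t, gK t⟩ : Σ' (A B : J) (_ : A ∈ O) (_ : B ∈ O), A ⟶ B))) ∪
      ((Finset.univ.image fun t =>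
        (⟨(E t).1, L t, mE t, mL t, fL t⟩ : Σ' (A B : J) (_ : A ∈ O) (_ : B ∈ O), A ⟶ B)) ∪
      (Finset.univ.image fun t =>
        (⟨(X t.2.1).1, L t, mX t.2.1, mL t, gL t⟩ : Σ' (A B : J) (_ : A ∈ O) (_ : B ∈ O), A ⟶ B)))
  have m1 : ∀ t, (⟨(E t).1, K t, mE t, mK t, fK t⟩ :
      Σ' (A B : J) (_ : A ∈ O) (_ : B ∈ O), A ⟶ B) ∈ H := fun t =>
    Finset.mem_union_left _ (Finset.mem_union_left _
      (Finset.mem_image_of_mem _ (Finset.mem_univ t)))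
  have m2 : ∀ t, (⟨(X t.1).1, K t, mX t.1, mK t, gK t⟩ :
      Σ' (A B : J) (_ : A ∈ O) (_ : B ∈ O), A ⟶ B) ∈ H := fun t =>
    Finset.mem_union_left _ (Finset.mem_union_right _
      (Finset.mem_image_of_mem _ (Finset.mem_univ t)))
  have m3 : ∀ t, (⟨(E t).1, L t, mE t, mL t, fL t⟩ :
      Σ' (A B : J) (_ : A ∈ O) (_ : B ∈ O), A ⟶ B) ∈ H := fun t =>
    Finset.mem_union_right _ (Finset.mem_union_left _
      (Finset.mem_image_of_mem _ (Finset.mem_univ t)))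
  have m4 : ∀ t, (⟨(X t.2.1).1, L t, mX t.2.1, mL t, gL t⟩ :
      Σ' (A B : J) (_ : A ∈ O) (_ : B ∈ O), A ⟶ B) ∈ H := fun t =>
    Finset.mem_union_right _ (Finset.mem_union_right _
      (Finset.mem_image_of_mem _ (Finset.mem_univ t)))
  obtain ⟨S, T, hT⟩ := IsFiltered.sup_exists O H
  have hpush1 : ∀ t : Σ x y : (G : Type u), x ⟶ y,
      (F.map (T (mE t))).obj (E t).2.1 = (F.map (T (mX t.1))).obj (X t.1).2 := by
    intro t
    rw [← hT (mE t) (mK t) (m1 t), ← hT (mX t.1) (mK t) (m2 t), F.map_comp, F.map_comp]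
    show (F.map (T (mK t))).obj ((F.map (fK t)).obj (E t).2.1)
      = (F.map (T (mK t))).obj ((F.map (gK t)).obj (X t.1).2)
    exact congrArg _ (hK t)
  have hpush2 : ∀ t : Σ x y : (G : Type u), x ⟶ y,
      (F.map (T (mE t))).obj (E t).2.2.1 = (F.map (T (mX t.2.1))).obj (X t.2.1).2 := by
    intro t
    rw [← hT (mE t) (mL t) (m3 t), ← hT (mX t.2.1) (mL t) (m4 t), F.map_comp, F.map_comp]
    show (F.map (T (mL t))).obj ((F.map (fL t)).obj (E t).2.2.1)
      = (F.map (T (mL t))).obj ((F.map (gL t)).obj (X t.2.1).2)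
    exact congrArg _ (hL t)
  let w : G ⟶ F.obj S :=
    { obj := fun v => (F.map (T (mX v))).obj (X v).2
      map := fun {p q} e =>
        Quiver.Hom.cast (hpush1 ⟨p, q, e⟩) (hpush2 ⟨p, q, e⟩)
          (ptot (F.map (T (mE ⟨p, q, e⟩))) (E ⟨p, q, e⟩).2).2.2 }
  refine ⟨S, w, (pext_toCQ F (fun v => ?_) (fun {p q} e => ?_)).symm⟩
  · show colimit.ι (F ⋙ vtxF) S ((F.map (T (mX v))).obj (X v).2) = u.obj v
    rw [← hX v]
    exact colimit.w_apply (F ⋙ vtxF) (T (mX v)) (X v).2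
  · show colimit.ι (F ⋙ totF) S
        (⟨w.obj p, w.obj q, w.map e⟩ : Σ x y : (F.obj S : Type u), x ⟶ y) = (u.map e).val
    have h1 : (⟨w.obj p, w.obj q, w.map e⟩ : Σ x y : (F.obj S : Type u), x ⟶ y)
        = ptot (F.map (T (mE ⟨p, q, e⟩))) (E ⟨p, q, e⟩).2 :=
      sigma_cast (hpush1 ⟨p, q, e⟩) (hpush2 ⟨p, q, e⟩) _
    rw [h1, ← hE ⟨p, q, e⟩]
    exact colimit.w_apply (F ⋙ totF) (T (mE ⟨p, q, e⟩)) (E ⟨p, q, e⟩).2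

theorem inj_aux {G : Quiv.{u, u}} (hV : Finite G) (hA : Finite (Σ x y : G, x ⟶ y))
    (i j : J) (ui : G ⟶ F.obj i) (uj : G ⟶ F.obj j) (h : ui ≫ cι F i = uj ≫ cι F j) :
    ∃ (k : J) (f : i ⟶ k) (g : j ⟶ k), ui ≫ F.map f = uj ≫ F.map g := by
  classical
  haveI := Fintype.ofFinite (G : Type u)
  haveI := Fintype.ofFinite (Σ x y : (G : Type u), x ⟶ y)
  have hv : ∀ v : (G : Type u),
      colimit.ι (F ⋙ vtxF) i (ui.obj v) = colimit.ι (F ⋙ vtxF) j (uj.obj v) := fun v =>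
    pcongr_obj h v
  have ha : ∀ t : Σ x y : (G : Type u), x ⟶ y,
      colimit.ι (F ⋙ totF) i (ptot ui t) = colimit.ι (F ⋙ totF) j (ptot uj t) := fun t =>
    congrArg (fun z : Σ x y : CQ F, x ⟶ y => z.2.2.val) (pcongr_tot h t)
  choose K fK gK hK using fun v =>
    (Types.FilteredColimit.colimit_eq_iff (F ⋙ vtxF)).mp (hv v)
  choose L fL gL hL using fun t =>
    (Types.FilteredColimit.colimit_eq_iff (F ⋙ totF)).mp (ha t)
  let O : Finset J := ({i, j} : Finset J) ∪ ((Finset.univ.image K) ∪ (Finset.univ.image L))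
  have mi : i ∈ O := Finset.mem_union_left _ (Finset.mem_insert_self _ _)
  have mj : j ∈ O := Finset.mem_union_left _
    (Finset.mem_insert_of_mem (Finset.mem_singleton_self _))
  have mK : ∀ v, K v ∈ O := fun v =>
    Finset.mem_union_right _ (Finset.mem_union_left _
      (Finset.mem_image_of_mem _ (Finset.mem_univ v)))
  have mL : ∀ t, L t ∈ O := fun t =>
    Finset.mem_union_right _ (Finset.mem_union_right _
      (Finset.mem_image_of_mem _ (Finset.mem_univ t)))
  let H : Finset (Σ' (A B : J) (_ : A ∈ O) (_ : B ∈ O), A ⟶ B) :=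
    ((Finset.univ.image fun v =>
        (⟨i, K v, mi, mK v, fK v⟩ : Σ' (A B : J) (_ : A ∈ O) (_ : B ∈ O), A ⟶ B)) ∪
      (Finset.univ.image fun v =>
        (⟨j, K v, mj, mK v, gK v⟩ : Σ' (A B : J) (_ : A ∈ O) (_ : B ∈ O), A ⟶ B))) ∪
      ((Finset.univ.image fun t =>
        (⟨i, L t, mi, mL t, fL t⟩ : Σ' (A B : J) (_ : A ∈ O) (_ : B ∈ O), A ⟶ B)) ∪
      (Finset.univ.image fun t =>
        (⟨j, L t, mj, mL t, gL t⟩ : Σ' (A B : J) (_ : A ∈ O) (_ : B ∈ O), A ⟶ B)))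
  have m1 : ∀ v, (⟨i, K v, mi, mK v, fK v⟩ :
      Σ' (A B : J) (_ : A ∈ O) (_ : B ∈ O), A ⟶ B) ∈ H := fun v =>
    Finset.mem_union_left _ (Finset.mem_union_left _
      (Finset.mem_image_of_mem _ (Finset.mem_univ v)))
  have m2 : ∀ v, (⟨j, K v, mj, mK v, gK v⟩ :
      Σ' (A B : J) (_ : A ∈ O) (_ : B ∈ O), A ⟶ B) ∈ H := fun v =>
    Finset.mem_union_left _ (Finset.mem_union_right _
      (Finset.mem_image_of_mem _ (Finset.mem_univ v)))
  have m3 : ∀ t, (⟨i, L t, mi, mL t, fL t⟩ :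
      Σ' (A B : J) (_ : A ∈ O) (_ : B ∈ O), A ⟶ B) ∈ H := fun t =>
    Finset.mem_union_right _ (Finset.mem_union_left _
      (Finset.mem_image_of_mem _ (Finset.mem_univ t)))
  have m4 : ∀ t, (⟨j, L t, mj, mL t, gL t⟩ :
      Σ' (A B : J) (_ : A ∈ O) (_ : B ∈ O), A ⟶ B) ∈ H := fun t =>
    Finset.mem_union_right _ (Finset.mem_union_right _
      (Finset.mem_image_of_mem _ (Finset.mem_univ t)))
  obtain ⟨S, T, hT⟩ := IsFiltered.sup_exists O H
  refine ⟨S, T mi, T mj, ?_⟩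
  refine pext_tot (fun v => ?_) (fun t => ?_)
  · show (F.map (T mi)).obj (ui.obj v) = (F.map (T mj)).obj (uj.obj v)
    rw [← hT mi (mK v) (m1 v), ← hT mj (mK v) (m2 v), F.map_comp, F.map_comp]
    show (F.map (T (mK v))).obj ((F.map (fK v)).obj (ui.obj v))
      = (F.map (T (mK v))).obj ((F.map (gK v)).obj (uj.obj v))
    exact congrArg _ (hK v)
  · show ptot (F.map (T mi)) (ptot ui t) = ptot (F.map (T mj)) (ptot uj t)
    rw [← hT mi (mL t) (m3 t), ← hT mj (mL t) (m4 t), F.map_comp, F.map_comp]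
    show ptot (F.map (T (mL t))) (ptot (F.map (fL t)) (ptot ui t))
      = ptot (F.map (T (mL t))) (ptot (F.map (gL t)) (ptot uj t))
    exact congrArg _ (hL t)

end Factor

theorem dir2 {G : Quiv.{u, u}} (hV : Finite G) (hA : Finite (Σ x y : G, x ⟶ y)) :
    _root_.IsFinitelyPresentable G := by
  intro J _ _
  constructor
  intro F
  refine preservesColimit_of_preserves_colimit_cocone (cIsColimit F) ?_
  refine Types.FilteredColimit.isColimitOf _ _ ?_ ?_
  · intro u
    obtain ⟨S, w, hw⟩ := surj_aux F hV hA u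
    exact ⟨S, w, hw⟩
  · intro i j ui uj hij
    exact inj_aux F hV hA i j ui uj hij

section Dir1

variable (G : Quiv.{u, u}) [DecidableEq (G : Type u)]
  [DecidableEq (Σ x y : (G : Type u), x ⟶ y)]

/-- Index poset of finite subquivers of `G`. -/
def SubIdx : Type u :=
  {p : Finset (G : Type u) × Finset (Σ x y : (G : Type u), x ⟶ y) //
    ∀ t ∈ p.2, t.1 ∈ p.1 ∧ t.2.1 ∈ p.1}

instance : Preorder (SubIdx G) :=
  inferInstanceAs (Preorder {p : Finset (G : Type u) × Finset (Σ x y : (G : Type u), x ⟶ y) //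
    ∀ t ∈ p.2, t.1 ∈ p.1 ∧ t.2.1 ∈ p.1})

instance : Nonempty (SubIdx G) := ⟨⟨⟨∅, ∅⟩, by simp⟩⟩

instance : IsDirected (SubIdx G) (· ≤ ·) := by
  constructor
  intro p q
  refine ⟨⟨⟨p.val.1 ∪ q.val.1, p.val.2 ∪ q.val.2⟩, ?_⟩, ?_, ?_⟩
  · intro t ht
    rcases Finset.mem_union.mp ht with h | h
    · exact ⟨Finset.mem_union_left _ (p.2 t h).1, Finset.mem_union_left _ (p.2 t h).2⟩
    · exact ⟨Finset.mem_union_right _ (q.2 t h).1, Finset.mem_union_right _ (q.2 t h).2⟩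
  · exact ⟨Finset.subset_union_left, Finset.subset_union_left⟩
  · exact ⟨Finset.subset_union_right, Finset.subset_union_right⟩

/-- Vertices of the subquiver indexed by `p`. -/
def SubV (p : SubIdx G) : Type u := {v : (G : Type u) // v ∈ p.val.1}

instance subVQuiver' (p : SubIdx G) : Quiver.{u} {v : (G : Type u) // v ∈ p.val.1} :=
  ⟨fun x y => {t : Σ a b : (G : Type u), a ⟶ b //
    t ∈ p.val.2 ∧ t.1 = x.val ∧ t.2.1 = y.val}⟩

instance subVQuiver (p : SubIdx G) : Quiver.{u} (SubV G p) := subVQuiver' G p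

/-- The diagram of finite subquivers of `G`. -/
def DSub : SubIdx G ⥤ Quiv.{u, u} where
  obj p := Quiv.of (SubV G p)
  map {p q} f :=
    { obj := fun x => ⟨x.1, (leOfHom f).1 x.2⟩
      map := fun {x y} e => ⟨e.1, (leOfHom f).2 e.2.1, e.2.2.1, e.2.2.2⟩ }
  map_id p := rfl
  map_comp f g := rfl

/-- The canonical cocone from the subquiver diagram to `G`. -/
def csub : Cocone (DSub G) where
  pt := G
  ι :=
    { app := fun p =>
        { obj := fun x => x.1
          map := fun {x y} e => Quiver.Hom.cast e.2.2.1 e.2.2.2 e.1.2.2 }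
      naturality := fun p q f => rfl }

/-- Singleton subquiver index. -/
def sing (v : (G : Type u)) : SubIdx G := ⟨⟨{v}, ∅⟩, by simp⟩

/-- Single-arrow subquiver index. -/
def pe (t : Σ a b : (G : Type u), a ⟶ b) : SubIdx G :=
  ⟨⟨{t.1, t.2.1}, {t}⟩, by
    intro s hs
    rw [Finset.mem_singleton] at hs
    subst hs
    exact ⟨Finset.mem_insert_self _ _, Finset.mem_insert_of_mem (Finset.mem_singleton_self _)⟩⟩

theorem mem_pe_src (t : Σ a b : (G : Type u), a ⟶ b) : t.1 ∈ (pe G t).val.1 :=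
  Finset.mem_insert_self _ _

theorem mem_pe_tgt (t : Σ a b : (G : Type u), a ⟶ b) : t.2.1 ∈ (pe G t).val.1 :=
  Finset.mem_insert_of_mem (Finset.mem_singleton_self _)

/-- The canonical arrow in the single-arrow subquiver. -/
def std (t : Σ a b : (G : Type u), a ⟶ b) :
    (⟨t.1, mem_pe_src G t⟩ : SubV G (pe G t)) ⟶ ⟨t.2.1, mem_pe_tgt G t⟩ :=
  ⟨t, Finset.mem_singleton_self _, rfl, rfl⟩

theorem sing_le_pe_src (t : Σ a b : (G : Type u), a ⟶ b) : sing G t.1 ≤ pe G t :=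
  ⟨Finset.singleton_subset_iff.mpr (mem_pe_src G t), Finset.empty_subset _⟩

theorem sing_le_pe_tgt (t : Σ a b : (G : Type u), a ⟶ b) : sing G t.2.1 ≤ pe G t :=
  ⟨Finset.singleton_subset_iff.mpr (mem_pe_tgt G t), Finset.empty_subset _⟩

theorem vpe_src (s : Cocone (DSub G)) (t : Σ a b : (G : Type u), a ⟶ b) :
    (s.ι.app (pe G t)).obj ⟨t.1, mem_pe_src G t⟩
      = (s.ι.app (sing G t.1)).obj ⟨t.1, Finset.mem_singleton_self _⟩ :=
  pcongr_obj (s.w (homOfLE (sing_le_pe_src G t))) ⟨t.1, Finset.mem_singleton_self _⟩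

theorem vpe_tgt (s : Cocone (DSub G)) (t : Σ a b : (G : Type u), a ⟶ b) :
    (s.ι.app (pe G t)).obj ⟨t.2.1, mem_pe_tgt G t⟩
      = (s.ι.app (sing G t.2.1)).obj ⟨t.2.1, Finset.mem_singleton_self _⟩ :=
  pcongr_obj (s.w (homOfLE (sing_le_pe_tgt G t))) ⟨t.2.1, Finset.mem_singleton_self _⟩

/-- The descended morphism out of `G`. -/
def descSub (s : Cocone (DSub G)) : G ⟶ s.pt where
  obj v := (s.ι.app (sing G v)).obj ⟨v, Finset.mem_singleton_self v⟩
  map {a b} e :=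
    Quiver.Hom.cast (vpe_src G s ⟨a, b, e⟩) (vpe_tgt G s ⟨a, b, e⟩)
      ((s.ι.app (pe G ⟨a, b, e⟩)).map (std G ⟨a, b, e⟩))

theorem descSub_heq (s : Cocone (DSub G)) {a b : (G : Type u)} (e : a ⟶ b) :
    HEq ((descSub G s).map e) ((s.ι.app (pe G ⟨a, b, e⟩)).map (std G ⟨a, b, e⟩)) :=
  Quiver.Hom.cast_heq _ _ _

theorem key_sub (s : Cocone (DSub G)) (m : G ⟶ s.pt)
    (hm : ∀ p, (csub G).ι.app p ≫ m = s.ι.app p) {a b : (G : Type u)} (e : a ⟶ b) :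
    HEq (m.map e) ((s.ι.app (pe G ⟨a, b, e⟩)).map (std G ⟨a, b, e⟩)) := by
  have h := pcongr_map (hm (pe G ⟨a, b, e⟩)) (std G ⟨a, b, e⟩)
  exact h

/-- The canonical cocone is a colimit cocone. -/
def isColimitSub : IsColimit (csub G) where
  desc := descSub G
  fac s p := by
    refine pext (fun x => ?_) (fun {x y} f => ?_)
    · obtain ⟨v, hv⟩ := x
      have hle : sing G v ≤ p := ⟨Finset.singleton_subset_iff.mpr hv, Finset.empty_subset _⟩
      exact (pcongr_obj (s.w (homOfLE hle)) ⟨v, Finset.mem_singleton_self _⟩).symm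
    · obtain ⟨xv, hx⟩ := x
      obtain ⟨yv, hy⟩ := y
      obtain ⟨⟨a, b, e⟩, hmem, h1, h2⟩ := f
      dsimp at h1 h2
      subst h1
      subst h2
      have hle : pe G ⟨a, b, e⟩ ≤ p := by
        constructor
        · intro z hz
          rcases Finset.mem_insert.mp hz with h | h
          · subst h; exact (p.2 _ hmem).1
          · rw [Finset.mem_singleton] at h; subst h; exact (p.2 _ hmem).2
        · exact Finset.singleton_subset_iff.mpr hmem
      refine HEq.trans (descSub_heq G s e) ?_
      have h := pcongr_map (s.w (homOfLE hle)) (std G ⟨a, b, e⟩)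
      exact h.symm
  uniq s m hm := by
    refine pext (fun v => ?_) (fun {a b} e => ?_)
    · exact pcongr_obj (hm (sing G v)) ⟨v, Finset.mem_singleton_self _⟩
    · exact (key_sub G s m hm e).trans (descSub_heq G s e).symm

end Dir1

theorem dir1 (G : Quiv.{u, u}) (h : _root_.IsFinitelyPresentable G) :
    Finite (G : Type u) ∧ Finite (Σ x y : (G : Type u), x ⟶ y) := by
  classical
  haveI := h (SubIdx G)
  obtain ⟨j, f, hf⟩ := Types.jointly_surjective _
    (isColimitOfPreserves (coyoneda.obj (Opposite.op G)) (isColimitSub G)) (𝟙 G)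
  have hobj : ∀ v : (G : Type u), ((csub G).ι.app j).obj (f.obj v) = v := fun v =>
    pcongr_obj hf v
  have htot : ∀ t : Σ x y : (G : Type u), x ⟶ y,
      ptot ((csub G).ι.app j) (ptot f t) = t := fun t => pcongr_tot hf t
  haveI : Finite (SubV G j) := inferInstanceAs (Finite {v // v ∈ j.val.1})
  haveI : ∀ x y : SubV G j, Finite (x ⟶ y) := fun x y =>
    Finite.of_injective (fun e => (⟨e.1, e.2.1⟩ : {t // t ∈ j.val.2}))
      (fun e e' hh => by
        have h2 : (⟨e.1, e.2.1⟩ : {t // t ∈ j.val.2}) = ⟨e'.1, e'.2.1⟩ := hh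
        exact Subtype.ext (congrArg (fun z : {t // t ∈ j.val.2} => z.val) h2))
  haveI : Finite (Σ x y : ↑((DSub G).obj j), x ⟶ y) :=
    inferInstanceAs (Finite (Σ x y : SubV G j, x ⟶ y))
  constructor
  · exact Finite.of_surjective (fun x : SubV G j => ((csub G).ι.app j).obj x)
      (fun v => ⟨f.obj v, hobj v⟩)
  · exact Finite.of_surjective (ptot ((csub G).ι.app j))
      (fun t => ⟨ptot f t, htot t⟩)

end QuivFP

theorem quiv_finitelyPresentable_iff_finite (G : Quiv.{u, u}) :
    _root_.IsFinitelyPresentable G ↔ (Finite G ∧ Finite (Σ a b : G, a ⟶ b)) := by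
  constructor
  · exact QuivFP.dir1 G
  · rintro ⟨hV, hA⟩
    exact QuivFP.dir2 hV hA
end

section
/- The forgetful functor from the category Cat of small categories to the category Quiv of small quivers is monadic: it has a left adjoint (the free/path category functor), and the comparison functor from Cat to the Eilenberg–Moore category of algebras for the induced monad on Quiv is an equivalence of categories. -/
/-!
The forgetful functor from the category `Cat` of small categories to the category
`Quiv` of small quivers is monadic: it has a left adjoint (the free/path category
functor), and the comparison functor from `Cat` to the Eilenberg–Moore category of
algebras for the induced monad on `Quiv` is an equivalence of categories.
-/

open CategoryTheory


universe u

namespace CatForgetMonadicAux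

open Quiver

theorem prefunctor_map_heq {A B : Type*} [Quiver A] [Quiver B] {P Q : Prefunctor A B}
    (h : P = Q) {x y : A} (f : x ⟶ y) : HEq (P.map f) (Q.map f) := by subst h; rfl

theorem mapPath_id {V : Type*} [Quiver V] {x y : V} (p : Path x y) :
    (Prefunctor.id V).mapPath p = p := by
  induction p with
  | nil => rfl
  | cons p e ih => rw [Prefunctor.mapPath_cons, ih]; rfl

variable (X : Quiv.adj.{u, u}.toMonad.Algebra)

theorem hobj (x : (X.A : Type u)) : X.a.obj x = x :=
  congrFun (congrArg Prefunctor.obj X.unit) x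

/-- The structure map of the algebra, normalized so that it is the identity on objects. -/
def A' : Prefunctor (Paths (X.A : Type u)) (X.A : Type u) where
  obj x := x
  map {x y} p := (X.a.map p).cast (hobj X x) (hobj X y)

theorem a_eq : X.a = A' X := by
  fapply Prefunctor.ext
  · exact hobj X
  · intro x y f
    simp only [A', eqRec_eq_cast, Hom.cast_eq_cast, cast_cast, cast_eq_iff_heq]
    apply eq_of_heq
    exact heq_eqRec_iff.mpr (heq_eqRec_iff.mpr (Hom.cast_heq _ _ _).symm)


theorem A'_toPath {x y : (X.A : Type u)} (e : x ⟶ y) : (A' X).map e.toPath = e := by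
  have hu := X.unit
  rw [a_eq] at hu
  exact eq_of_heq (prefunctor_map_heq hu e)

theorem key {x y z : (X.A : Type u)} (p : Path x y) (q : Path y z) :
    (A' X).map (p.comp q) =
      (A' X).map (((A' X).map p).toPath.comp ((A' X).map q).toPath) := by
  have ha := X.assoc
  rw [a_eq] at ha
  have h :=
    eq_of_heq (prefunctor_map_heq ha
      ((Quiver.Hom.toPath (V := Paths (X.A : Type u)) p).comp (Quiver.Hom.toPath q)))
  have h' : (A' X).map ((Path.nil.comp p).comp q) =
      (A' X).map (((A' X).map p).toPath.comp ((A' X).map q).toPath) := h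
  rwa [Path.nil_comp] at h'

/-- The category structure on the carrier of the algebra. -/
def algCategory : Category (X.A : Type u) where
  Hom x y := x ⟶ y
  id x := (A' X).map (Path.nil : Path x x)
  comp {x y z} f g := (A' X).map (f.toPath.comp g.toPath)
  id_comp {x y} f := by
    have h := key X (Path.nil : Path x x) f.toPath
    rw [Path.nil_comp, A'_toPath] at h
    exact h.symm
  comp_id {x y} f := by
    have h := key X f.toPath (Path.nil : Path y y)
    rw [A'_toPath] at h
    exact h.symm.trans (A'_toPath X f)
  assoc {w x y z} f g h := by
    have h1 := key X (f.toPath.comp g.toPath) h.toPath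
    rw [A'_toPath] at h1
    have h2 := key X f.toPath (g.toPath.comp h.toPath)
    rw [A'_toPath] at h2
    show (A' X).map (((A' X).map (f.toPath.comp g.toPath)).toPath.comp _) = _
    refine h1.symm.trans ?_
    rw [Path.comp_assoc, h2]
    rfl

/-- The carrier of the algebra as a category. -/
def algCat : Cat.{u, u} := @Cat.of (X.A : Type u) (algCategory X)

theorem composePath_eq {x y : (X.A : Type u)} (p : Path x y) :
    @composePath _ (algCategory X) _ _ p = (A' X).map p := by
  induction p with
  | nil => rfl
  | cons p e ih =>
    show (algCategory X).comp (@composePath _ (algCategory X) _ _ p) e = _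
    rw [ih]
    have h := key X p e.toPath
    rw [A'_toPath] at h
    exact h.symm

theorem lift_eq : Quiv.forget.map (Quiv.adj.{u, u}.counit.app (algCat X)) = X.a := by
  rw [a_eq]
  fapply Prefunctor.ext
  · intro x; rfl
  · intro x y f
    have h2 : (Quiv.forget.map (Quiv.adj.{u, u}.counit.app (algCat X))).map f
        = (A' X).map f := by
      show @composePath _ (algCategory X) _ _ f = _
      have h3 : Prefunctor.mapPath (𝟙 (Quiv.forget.obj (algCat X))) f = f := mapPath_id f
      exact composePath_eq X f
    exact h2

instance : (Monad.comparison Quiv.adj.{u, u}).EssSurj where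
  mem_essImage X :=
    ⟨algCat X, ⟨Monad.Algebra.isoMk (Iso.refl _) (by
      show Quiv.adj.toMonad.map (𝟙 _) ≫ X.a
          = Quiv.forget.map (Quiv.adj.{u, u}.counit.app (algCat X)) ≫ 𝟙 _
      rw [CategoryTheory.Functor.map_id, Category.id_comp, Category.comp_id, lift_eq])⟩⟩


instance : Quiv.forget.{u, u}.Faithful where
  map_injective {C D} F G h := by
    obtain ⟨⟨F⟩⟩ := F; obtain ⟨⟨G⟩⟩ := G; cases h; rfl

instance : (Monad.comparison Quiv.adj.{u, u}).Full where
  map_surjective {C D} g := by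
    let fg : Prefunctor (C : Type u) (D : Type u) := g.f
    have hp : ∀ {x y : (C : Type u)} (p : Path x y),
        composePath (fg.mapPath p) = fg.map (composePath p) := by
      intro x y p
      have h := eq_of_heq (prefunctor_map_heq g.h p)
      have e1 : Prefunctor.mapPath (𝟙 (Quiv.forget.obj D)) (fg.mapPath p)
          = fg.mapPath p := mapPath_id _
      have e2 : Prefunctor.mapPath (𝟙 (Quiv.forget.obj C)) p = p := mapPath_id _
      have h' : @composePath _ (Cat.str D) _ _ (fg.mapPath p)
          = fg.map (@composePath _ (Cat.str C) _ _ p) := h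
      exact h'
    refine ⟨{ toFunctor := { obj := fg.obj, map := fun f => fg.map f, map_id := ?_, map_comp := ?_ } }, ?_⟩
    · intro x
      exact (hp (Path.nil : Path x x)).symm
    · intro x y z f h
      have h2 := hp (f.toPath.comp h.toPath)
      have h3 : (𝟙 _ ≫ fg.map f) ≫ fg.map h = fg.map ((𝟙 _ ≫ f) ≫ h) := h2
      simpa using h3.symm
    · exact Monad.Algebra.Hom.ext rfl

end CatForgetMonadicAux

theorem cat_forget_to_quiv_monadic :
    Nonempty (Cat.free.{u, u} ⊣ Quiv.forget.{u, u}) ∧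
      Nonempty (MonadicRightAdjoint Quiv.forget.{u, u}) := by
  exact ⟨⟨Quiv.adj⟩, ⟨{ L := Cat.free, adj := Quiv.adj, eqv := {} }⟩⟩
end

section
/- The free categories on finite quivers form a dense family of generators of the category Cat of small categories: the inclusion into Cat of the full subcategory spanned by free categories F(G) on finite quivers G is a dense functor, i.e. every small category M is the colimit of the canonical diagram of free categories on finite quivers mapping into M. -/
/-!
The free categories on finite quivers form a dense family of generators of `Cat`:
for every small category `M`, the canonical cocone on the canonical diagram
`(ι / M) ⥤ Cat` (where `ι` is the inclusion of the full subcategory of `Cat` spanned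
by the free categories on finite quivers) with apex `M` is a colimit cocone.
-/

open CategoryTheory CategoryTheory.Limits

universe u

/-- The objects of `Cat` that are free categories on finite quivers. -/
def IsFreeOnFiniteQuiver (C : Cat.{u, u}) : Prop :=
  ∃ G : Quiv.{u, u}, Finite G ∧ Finite (Σ a b : G, a ⟶ b) ∧ C = Cat.free.{u, u}.obj G

/-- The inclusion of the full subcategory of `Cat` spanned by the free categories
on finite quivers. -/
def freeOnFiniteInclusion : ObjectProperty.FullSubcategory IsFreeOnFiniteQuiver.{u} ⥤ Cat.{u, u} :=
  ObjectProperty.ι _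

/-- The canonical cocone with apex `M` on the canonical diagram of free categories on
finite quivers mapping into `M`. -/
def canonicalCocone (M : Cat.{u, u}) :
    Cocone (CostructuredArrow.proj freeOnFiniteInclusion.{u} M ⋙ freeOnFiniteInclusion.{u}) where
  pt := M
  ι := { app := fun g => g.hom,
          naturality := by
            intro X Y f
            simp only [Functor.const_obj_map, Category.comp_id]
            exact CostructuredArrow.w f }

namespace FreeDense

inductive PtV : Type u | star
instance : Quiver.{u} PtV := ⟨fun _ _ => PEmpty⟩
instance : Finite PtV :=
  Finite.of_equiv PUnit ⟨fun _ => .star, fun _ => .unit, fun _ => rfl, fun x => by cases x; rfl⟩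
instance instFinPtE {a b : PtV} : Finite (a ⟶ b) := by
  show Finite PEmpty; infer_instance

inductive ArrV : Type u | src | tgt
inductive ArrE : ArrV.{u} → ArrV.{u} → Type u | arr : ArrE .src .tgt
instance : Quiver.{u} ArrV := ⟨ArrE⟩
instance : Finite ArrV :=
  Finite.of_equiv Bool ⟨fun b => if b then .tgt else .src,
    fun x => match x with | .src => false | .tgt => true,
    fun b => by cases b <;> rfl, fun x => by cases x <;> rfl⟩
instance {a b : ArrV} : Subsingleton (ArrE a b) := ⟨fun x y => by cases x; cases y; rfl⟩
instance instFinArrE {a b : ArrV} : Finite (a ⟶ b) := by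
  show Finite (ArrE a b); exact Finite.of_subsingleton

inductive CompV : Type u | v0 | v1 | v2
inductive CompE : CompV.{u} → CompV.{u} → Type u
  | e0 : CompE .v0 .v1
  | e1 : CompE .v1 .v2
instance : Quiver.{u} CompV := ⟨CompE⟩
instance : Finite CompV :=
  Finite.of_surjective (fun i : Fin 3 => match i with | 0 => .v0 | 1 => .v1 | 2 => .v2)
    (fun x => by
      cases x with
      | v0 => exact ⟨0, rfl⟩
      | v1 => exact ⟨1, rfl⟩
      | v2 => exact ⟨2, rfl⟩)
instance {a b : CompV} : Subsingleton (CompE a b) :=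
  ⟨fun x y => by cases x <;> cases y <;> rfl⟩
instance instFinCompE {a b : CompV} : Finite (a ⟶ b) := by
  show Finite (CompE a b); exact Finite.of_subsingleton

def ptQ : Quiv.{u, u} := Quiv.of PtV
def arrQ : Quiv.{u, u} := Quiv.of ArrV
def compQ : Quiv.{u, u} := Quiv.of CompV

def ptC : ObjectProperty.FullSubcategory IsFreeOnFiniteQuiver.{u} :=
  ⟨Cat.free.obj ptQ, ⟨ptQ, (inferInstance : Finite PtV),
    (inferInstance : Finite (Σ a b : PtV, a ⟶ b)), rfl⟩⟩
def arrC : ObjectProperty.FullSubcategory IsFreeOnFiniteQuiver.{u} :=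
  ⟨Cat.free.obj arrQ, ⟨arrQ, (inferInstance : Finite ArrV),
    (inferInstance : Finite (Σ a b : ArrV, a ⟶ b)), rfl⟩⟩
def compC : ObjectProperty.FullSubcategory IsFreeOnFiniteQuiver.{u} :=
  ⟨Cat.free.obj compQ, ⟨compQ, (inferInstance : Finite CompV),
    (inferInstance : Finite (Σ a b : CompV, a ⟶ b)), rfl⟩⟩

variable {M : Cat.{u, u}}

/-- Pick an object. -/
def ptFun (m : M) : Paths PtV.{u} ⥤ M :=
  Paths.lift (V := PtV) { obj := fun _ => m, map := fun e => e.elim }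

/-- Pick a morphism. -/
def arrFun {m n : M} (f : m ⟶ n) : Paths ArrV.{u} ⥤ M :=
  Paths.lift (V := ArrV)
    { obj := fun x => match x with | .src => m | .tgt => n
      map := fun e => match e with | .arr => f }

/-- Pick a composable pair. -/
def compFun {m n p : M} (f : m ⟶ n) (g : n ⟶ p) : Paths CompV.{u} ⥤ M :=
  Paths.lift (V := CompV)
    { obj := fun x => match x with | .v0 => m | .v1 => n | .v2 => p
      map := fun e => match e with | .e0 => f | .e1 => g }

abbrev D (M : Cat.{u, u}) :=
  CostructuredArrow.proj freeOnFiniteInclusion.{u} M ⋙ freeOnFiniteInclusion.{u}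

def ptO (m : M) : CostructuredArrow freeOnFiniteInclusion.{u} M :=
  CostructuredArrow.mk (Y := ptC) (show freeOnFiniteInclusion.obj ptC ⟶ M from Cat.Hom.ofFunctor (ptFun m))

def arrO {m n : M} (f : m ⟶ n) : CostructuredArrow freeOnFiniteInclusion.{u} M :=
  CostructuredArrow.mk (Y := arrC) (show freeOnFiniteInclusion.obj arrC ⟶ M from Cat.Hom.ofFunctor (arrFun f))

def compO {m n p : M} (f : m ⟶ n) (g : n ⟶ p) :
    CostructuredArrow freeOnFiniteInclusion.{u} M :=
  CostructuredArrow.mk (Y := compC) (show freeOnFiniteInclusion.obj compC ⟶ M from Cat.Hom.ofFunctor (compFun f g))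

lemma nat (s : Cocone (D M)) {X Y : CostructuredArrow freeOnFiniteInclusion.{u} M}
    (φ : X ⟶ Y) : s.ι.app X = (D M).map φ ≫ s.ι.app Y := by
  simpa using (s.ι.naturality φ).symm

lemma natF (s : Cocone (D M)) {X Y : CostructuredArrow freeOnFiniteInclusion.{u} M}
    (φ : X ⟶ Y) : (s.ι.app X).toFunctor = ((D M).map φ).toFunctor ⋙ (s.ι.app Y).toFunctor :=
  congrArg Cat.Hom.toFunctor (nat s φ)

/-- Inclusion of the source. -/
def srcIncl : Paths PtV.{u} ⥤ Paths ArrV.{u} :=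
  Paths.lift (V := PtV) { obj := fun _ => ArrV.src, map := fun e => e.elim }

/-- Inclusion of the target. -/
def tgtIncl : Paths PtV.{u} ⥤ Paths ArrV.{u} :=
  Paths.lift (V := PtV) { obj := fun _ => ArrV.tgt, map := fun e => e.elim }

def i0 {m n : M} (f : m ⟶ n) : ptO m ⟶ arrO f :=
  CostructuredArrow.homMk (show ptC ⟶ arrC from ObjectProperty.homMk (Cat.Hom.ofFunctor srcIncl))
    (Cat.ext (Paths.ext_functor (V := PtV) (funext fun x => by cases x; rfl) (fun a b e => e.elim)))

def i1 {m n : M} (f : m ⟶ n) : ptO n ⟶ arrO f :=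
  CostructuredArrow.homMk (show ptC ⟶ arrC from ObjectProperty.homMk (Cat.Hom.ofFunctor tgtIncl))
    (Cat.ext (Paths.ext_functor (V := PtV) (funext fun x => by cases x; rfl) (fun a b e => e.elim)))

lemma e0 (s : Cocone (D M)) {m n : M} (f : m ⟶ n) :
    (s.ι.app (ptO m)).toFunctor.obj PtV.star = (s.ι.app (arrO f)).toFunctor.obj ArrV.src :=
  Functor.congr_obj (natF s (i0 f)) PtV.star

lemma e1 (s : Cocone (D M)) {m n : M} (f : m ⟶ n) :
    (s.ι.app (ptO n)).toFunctor.obj PtV.star = (s.ι.app (arrO f)).toFunctor.obj ArrV.tgt :=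
  Functor.congr_obj (natF s (i1 f)) PtV.star

/-- Collapse the walking arrow onto the point. -/
def collapse : Paths ArrV.{u} ⥤ Paths PtV.{u} :=
  Paths.lift (V := ArrV) { obj := fun _ => PtV.star, map := fun _ => 𝟙 _ }

def cm (m : M) : arrO (𝟙 m) ⟶ ptO m :=
  CostructuredArrow.homMk (show arrC ⟶ ptC from ObjectProperty.homMk (Cat.Hom.ofFunctor collapse))
    (by
      refine Cat.ext (Paths.ext_functor (V := ArrV) (C := M) ?_ ?_)
      · funext x; cases x <;> rfl
      rintro a b ⟨⟩
      show (collapse ⋙ ptFun m).map _ = _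
      erw [Functor.comp_map, Paths.lift_toPath]
      simp [collapse, ptFun, arrFun, arrO, ptO]
      erw [CategoryTheory.Functor.map_id, eqToHom_refl, Category.id_comp, Category.id_comp]
      rfl)

def l0 : Paths ArrV.{u} ⥤ Paths CompV.{u} :=
  Paths.lift (V := ArrV)
    { obj := fun x => match x with | .src => CompV.v0 | .tgt => CompV.v1
      map := fun e => match e with
        | .arr => Quiver.Hom.toPath (V := CompV) (a := CompV.v0) (b := CompV.v1) CompE.e0 }

def l1 : Paths ArrV.{u} ⥤ Paths CompV.{u} :=
  Paths.lift (V := ArrV)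
    { obj := fun x => match x with | .src => CompV.v1 | .tgt => CompV.v2
      map := fun e => match e with
        | .arr => Quiver.Hom.toPath (V := CompV) (a := CompV.v1) (b := CompV.v2) CompE.e1 }

def path02 : @Quiver.Hom (Paths CompV.{u}) CategoryStruct.toQuiver CompV.v0 CompV.v2 :=
  CategoryStruct.comp (obj := Paths CompV.{u})
    (Quiver.Hom.toPath (V := CompV) (a := CompV.v0) (b := CompV.v1) CompE.e0)
    (Quiver.Hom.toPath (V := CompV) (a := CompV.v1) (b := CompV.v2) CompE.e1)

def l2 : Paths ArrV.{u} ⥤ Paths CompV.{u} :=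
  Paths.lift (V := ArrV)
    { obj := fun x => match x with | .src => CompV.v0 | .tgt => CompV.v2
      map := fun e => match e with | .arr => path02 }

def j0 {m n p : M} (f : m ⟶ n) (g : n ⟶ p) : arrO f ⟶ compO f g :=
  CostructuredArrow.homMk (show arrC ⟶ compC from ObjectProperty.homMk (Cat.Hom.ofFunctor l0))
    (by
      refine Cat.ext (Paths.ext_functor (V := ArrV) (C := M) ?_ ?_)
      · funext x; cases x <;> rfl
      rintro a b ⟨⟩
      show (l0 ⋙ compFun f g).map _ = _
      erw [Functor.comp_map, Paths.lift_toPath]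
      simp [l0, compFun, arrFun, arrO, compO]
      erw [eqToHom_refl, eqToHom_refl, Category.id_comp, Category.comp_id])

def j1 {m n p : M} (f : m ⟶ n) (g : n ⟶ p) : arrO g ⟶ compO f g :=
  CostructuredArrow.homMk (show arrC ⟶ compC from ObjectProperty.homMk (Cat.Hom.ofFunctor l1))
    (by
      refine Cat.ext (Paths.ext_functor (V := ArrV) (C := M) ?_ ?_)
      · funext x; cases x <;> rfl
      rintro a b ⟨⟩
      show (l1 ⋙ compFun f g).map _ = _
      erw [Functor.comp_map, Paths.lift_toPath]
      simp [l1, compFun, arrFun, arrO, compO]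
      erw [eqToHom_refl, eqToHom_refl, Category.id_comp, Category.comp_id])

def j2 {m n p : M} (f : m ⟶ n) (g : n ⟶ p) : arrO (f ≫ g) ⟶ compO f g :=
  CostructuredArrow.homMk (show arrC ⟶ compC from ObjectProperty.homMk (Cat.Hom.ofFunctor l2))
    (by
      refine Cat.ext (Paths.ext_functor (V := ArrV) (C := M) ?_ ?_)
      · funext x; cases x <;> rfl
      rintro a b ⟨⟩
      show (l2 ⋙ compFun f g).map _ = _
      erw [Functor.comp_map, Paths.lift_toPath]
      simp [l2, path02, compFun, arrFun, arrO, compO]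
      erw [eqToHom_refl, eqToHom_refl, Category.id_comp, Category.comp_id]
      erw [CategoryTheory.Functor.map_comp, Paths.lift_toPath, Paths.lift_toPath]
      rfl)

def genA : @Quiver.Hom (Paths ArrV.{u}) CategoryStruct.toQuiver ArrV.src ArrV.tgt :=
  Quiver.Hom.toPath (V := ArrV) (a := .src) (b := .tgt) ArrE.arr

@[simp] lemma lift_genA {C : Type*} [Category C] (φ : ArrV.{u} ⥤q C) :
    (Paths.lift φ).map genA = φ.map ArrE.arr :=
  Paths.lift_toPath φ ArrE.arr

def p0 : @Quiver.Hom (Paths CompV.{u}) CategoryStruct.toQuiver CompV.v0 CompV.v1 :=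
  Quiver.Hom.toPath (V := CompV) (a := CompV.v0) (b := CompV.v1) CompE.e0

def p1 : @Quiver.Hom (Paths CompV.{u}) CategoryStruct.toQuiver CompV.v1 CompV.v2 :=
  Quiver.Hom.toPath (V := CompV) (a := CompV.v1) (b := CompV.v2) CompE.e1

/-- The descended functor. -/
def descF (s : Cocone (D M)) : M ⥤ s.pt where
  obj m := (s.ι.app (ptO m)).toFunctor.obj PtV.star
  map {m n} f :=
    eqToHom (e0 s f) ≫ (s.ι.app (arrO f)).toFunctor.map genA ≫ eqToHom (e1 s f).symm
  map_id m := by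
    have hA := (conj_eqToHom_iff_heq ((s.ι.app (arrO (𝟙 m))).toFunctor.map genA)
      ((s.ι.app (ptO m)).toFunctor.map (𝟙 _)) (Functor.congr_obj (natF s (cm m)) ArrV.src)
      (Functor.congr_obj (natF s (cm m)) ArrV.tgt)).2 (Functor.hcongr_hom (natF s (cm m)) genA)
    rw [hA]
    erw [CategoryTheory.Functor.map_id]
    simp
  map_comp {m n p} f g := by
    have hA := (conj_eqToHom_iff_heq ((s.ι.app (arrO (f ≫ g))).toFunctor.map genA)
      ((s.ι.app (compO f g)).toFunctor.map p0 ≫ (s.ι.app (compO f g)).toFunctor.map p1)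
      (Functor.congr_obj (natF s (j2 f g)) ArrV.src)
      (Functor.congr_obj (natF s (j2 f g)) ArrV.tgt)).2 ((Functor.hcongr_hom (natF s (j2 f g)) genA).trans
        (heq_of_eq ((s.ι.app (compO f g)).toFunctor.map_comp p0 p1)))
    have hB := (conj_eqToHom_iff_heq ((s.ι.app (arrO f)).toFunctor.map genA)
      ((s.ι.app (compO f g)).toFunctor.map p0) (Functor.congr_obj (natF s (j0 f g)) ArrV.src)
      (Functor.congr_obj (natF s (j0 f g)) ArrV.tgt)).2 (Functor.hcongr_hom (natF s (j0 f g)) genA)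
    have hC := (conj_eqToHom_iff_heq ((s.ι.app (arrO g)).toFunctor.map genA)
      ((s.ι.app (compO f g)).toFunctor.map p1) (Functor.congr_obj (natF s (j1 f g)) ArrV.src)
      (Functor.congr_obj (natF s (j1 f g)) ArrV.tgt)).2 (Functor.hcongr_hom (natF s (j1 f g)) genA)
    rw [hA, hB, hC]
    simp only [Category.assoc]
    erw [eqToHom_trans_assoc, eqToHom_trans_assoc, eqToHom_trans_assoc, eqToHom_trans_assoc,
      eqToHom_trans_assoc]
    erw [eqToHom_trans, eqToHom_trans]
    erw [eqToHom_refl, Category.id_comp]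

end FreeDense

open FreeDense in
/-- Density: every small category `M` is the colimit of the canonical diagram of free
categories on finite quivers mapping into `M`. -/
theorem freeOnFinite_dense (M : Cat.{u, u}) :
    Nonempty (IsColimit (canonicalCocone M)) := by
  constructor
  refine
    { desc := fun s => Cat.Hom.ofFunctor (descF s)
      fac := ?_
      uniq := ?_ }
  · intro s X
    apply Cat.ext
    fapply CategoryTheory.Functor.ext
    · intro c
      let k0 : ptO (X.hom.toFunctor.obj c) ⟶ X := CostructuredArrow.homMk
          (show ptC ⟶ X.left from ObjectProperty.homMk (Cat.Hom.ofFunctor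
            (Paths.lift (V := PtV) { obj := fun _ => c, map := fun e => e.elim })))
          (Cat.ext (Paths.ext_functor (V := PtV) (C := M) (funext fun x => by cases x; rfl)
            (fun a b e => e.elim)))
      exact Functor.congr_obj (natF s k0) PtV.star
    · intro c c' ψ
      let k1 : arrO (X.hom.toFunctor.map ψ) ⟶ X := CostructuredArrow.homMk
          (show arrC ⟶ X.left from ObjectProperty.homMk (Cat.Hom.ofFunctor
            (Paths.lift (V := ArrV)
              { obj := fun x => match x with | .src => c | .tgt => c'
                map := fun e => match e with | .arr => ψ })))
          (by
            refine Cat.ext (Paths.ext_functor (V := ArrV) (C := M) ?_ ?_)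
            · funext x; cases x <;> rfl
            rintro a b ⟨⟩
            erw [Functor.comp_map, Paths.lift_toPath]
            simp [arrFun, arrO, freeOnFiniteInclusion]
            erw [eqToHom_refl, eqToHom_refl, Category.id_comp, Category.comp_id]
            rfl)
      have hk := (conj_eqToHom_iff_heq ((s.ι.app (arrO (X.hom.toFunctor.map ψ))).toFunctor.map genA)
        ((s.ι.app X).toFunctor.map (𝟙 c ≫ ψ)) (Functor.congr_obj (natF s k1) ArrV.src)
        (Functor.congr_obj (natF s k1) ArrV.tgt)).2 (Functor.hcongr_hom (natF s k1) genA)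
      show (descF s).map (X.hom.toFunctor.map ψ) = _
      rw [show (descF s).map (X.hom.toFunctor.map ψ) =
        eqToHom (e0 s _) ≫ (s.ι.app (arrO (X.hom.toFunctor.map ψ))).toFunctor.map genA ≫
          eqToHom (e1 s _).symm from rfl]
      rw [hk]
      simp [k1, freeOnFiniteInclusion, lift_genA]
      erw [Category.id_comp]
      exact (eqToHom_trans_assoc _ _ _).trans rfl
  · intro s u h
    apply Cat.ext
    fapply CategoryTheory.Functor.ext
    · intro m
      exact Functor.congr_obj (congrArg Cat.Hom.toFunctor (h (ptO m))) PtV.star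
    · intro m n f
      have hk := Functor.congr_hom (congrArg Cat.Hom.toFunctor (h (arrO f))) genA
      erw [Cat.Hom.comp_map] at hk
      rw [show ((canonicalCocone M).ι.app (arrO f)).toFunctor.map genA = f from by
        show (arrFun f).map genA = f
        simp [arrFun, lift_genA]
        rfl] at hk
      erw [hk]
      show _ = eqToHom _ ≫ (eqToHom (e0 s f) ≫ (s.ι.app (arrO f)).toFunctor.map genA ≫
        eqToHom (e1 s f).symm) ≫ eqToHom _
      simp only [Category.assoc]
      erw [eqToHom_trans_assoc, eqToHom_trans]
end

section
/- The class of small categories admitting a finite presentation is stable under finite colimits in Cat: a finite coproduct of categories admitting finite presentations admits a finite presentation, and if P and Q admit finite presentations and u, v : P → Q are functors, then the coequalizer of u and v in Cat admits a finite presentation. -/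
/-!
The class of small categories admitting a finite presentation is stable under finite
colimits in `Cat`: a finite coproduct of categories admitting finite presentations
admits a finite presentation, and the coequalizer of two functors between categories
admitting finite presentations admits a finite presentation.
-/

open CategoryTheory CategoryTheory.Limits

universe u

/-- A quiver is finite if it has finitely many vertices and finitely many arrows. -/
def FiniteQuiv (G : Quiv.{u, u}) : Prop :=
  Finite G ∧ Finite (Σ a b : G, a ⟶ b)

/-- A small category `M` admits a finite presentation if there are finite quivers `H`
and `G` and functors `α, β : F(H) ⟶ F(G)` between the corresponding free (path)
categories such that `M` is a coequalizer of `α` and `β` in `Cat`. -/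
def HasFinitePresentation (M : Cat.{u, u}) : Prop :=
  ∃ (H G : Quiv.{u, u}), FiniteQuiv H ∧ FiniteQuiv G ∧
    ∃ (α β : Cat.free.{u, u}.obj H ⟶ Cat.free.{u, u}.obj G) (q : Cat.free.{u, u}.obj G ⟶ M)
      (w : α ≫ q = β ≫ q), Nonempty (IsColimit (Cofork.ofπ q w))

lemma epi_of_cofork {C : Type*} [Category C] {X Y : C} {f g : X ⟶ Y} {c : Cofork f g}
    (hc : IsColimit c) : Epi c.π :=
  ⟨fun _ _ w => Cofork.IsColimit.hom_ext hc w⟩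

lemma catCongrObj {C D : Cat.{u,u}} {F G : C ⟶ D} (h : F = G) (X : C) :
    F.toFunctor.obj X = G.toFunctor.obj X := by subst h; rfl

lemma catCongrHom {C D : Cat.{u,u}} {F G : C ⟶ D} (h : F = G) {X Y : C} (f : X ⟶ Y) :
    F.toFunctor.map f = eqToHom (catCongrObj h X) ≫ G.toFunctor.map f ≫
      eqToHom (catCongrObj h Y).symm := by subst h; simp

lemma eqToHom_conj_self {C : Type*} [Category C] {X Y : C} (f : X ⟶ Y) (h : X = X) (h' : Y = Y) :
    f = eqToHom h ≫ f ≫ eqToHom h' := by simp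

lemma eqToHom_sandwich {C : Type*} [Category C] {X X₂ Y Y₂ : C} (φ : X ⟶ Y) (a : X = X₂)
    (b : X₂ = X) (c : Y = Y₂) (d : Y₂ = Y) :
    eqToHom a ≫ (eqToHom b ≫ φ ≫ eqToHom c) ≫ eqToHom d = φ := by subst a; subst c; simp

lemma free_hom_ext {V : Quiv.{u,u}} {C : Cat.{u,u}} {F G : Cat.free.{u,u}.obj V ⟶ C}
    (hobj : ∀ v : V, F.toFunctor.obj v = G.toFunctor.obj v)
    (hmap : ∀ (a b : V) (e : a ⟶ b), F.toFunctor.map e.toPath =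
      eqToHom (hobj a) ≫ G.toFunctor.map e.toPath ≫ eqToHom (hobj b).symm) : F = G :=
  Cat.ext (Paths.ext_functor (V := ↥V) (C := ↥C) (funext hobj) (fun a b e => hmap a b e))

section Part2
variable (Q : Cat.{u, u}) (G₀ : Quiv.{u, u}) (π : Cat.free.{u,u}.obj G₀ ⟶ Q)

/-- objects of `Q` as vertices of a new quiver -/
def GenVert (_ : Cat.free.{u,u}.obj G₀ ⟶ Q) : Type u := Q

/-- arrows of the new quiver: arrows of `G₀` with identifications of endpoints -/
structure GenArrow (x y : GenVert Q G₀ π) : Type u where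
  a : G₀
  b : G₀
  e : a ⟶ b
  ha : π.toFunctor.obj a = x
  hb : π.toFunctor.obj b = y

instance : Quiver.{u} (GenVert Q G₀ π) := ⟨fun x y => GenArrow Q G₀ π x y⟩

def genQuiv : Quiv.{u, u} := Quiv.of (GenVert Q G₀ π)

def rho0 : @Prefunctor (GenVert Q G₀ π) _ Q (CategoryStruct.toQuiver) where
  obj x := x
  map {_ _} ar := eqToHom ar.ha.symm ≫ π.toFunctor.map ar.e.toPath ≫ eqToHom ar.hb

def rho : Cat.free.{u,u}.obj (genQuiv Q G₀ π) ⟶ Q :=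
  (Paths.lift (V := GenVert Q G₀ π) (rho0 Q G₀ π)).toCatHom

@[simp] lemma rho_obj (x : GenVert Q G₀ π) : (rho Q G₀ π).toFunctor.obj x = x := rfl

lemma rho_map_toPath {x y : GenVert Q G₀ π} (ar : x ⟶ y) :
    (rho Q G₀ π).toFunctor.map ar.toPath = eqToHom ar.ha.symm ≫ π.toFunctor.map ar.e.toPath ≫ eqToHom ar.hb := by
  exact Paths.lift_toPath _ _

def flat0 : @Prefunctor ↥G₀ G₀.str' (Paths (GenVert Q G₀ π)) (Paths.categoryPaths _).toQuiver where
  obj v := π.toFunctor.obj v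
  map {a b} e :=
    Quiver.Hom.toPath (V := GenVert Q G₀ π)
      (⟨a, b, e, rfl, rfl⟩ : GenArrow Q G₀ π (π.toFunctor.obj a) (π.toFunctor.obj b))

def flat : Cat.free.{u,u}.obj G₀ ⟶ Cat.free.{u,u}.obj (genQuiv Q G₀ π) :=
  (Paths.lift (V := ↥G₀) (flat0 Q G₀ π)).toCatHom

@[simp] lemma flat_obj (v : ↥G₀) : (flat Q G₀ π).toFunctor.obj v = π.toFunctor.obj v := rfl

lemma flat_rho : flat Q G₀ π ≫ rho Q G₀ π = π := by
  apply free_hom_ext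
  case hobj => intro v; rfl
  case hmap =>
    intro a b e
    show (rho Q G₀ π).toFunctor.map ((flat Q G₀ π).toFunctor.map e.toPath) = _
    have h1 : (flat Q G₀ π).toFunctor.map e.toPath =
        Quiver.Hom.toPath (V := GenVert Q G₀ π)
          (⟨a, b, e, rfl, rfl⟩ : GenArrow Q G₀ π (π.toFunctor.obj a) (π.toFunctor.obj b)) :=
      Paths.lift_toPath _ _
    rw [h1]; exact rho_map_toPath Q G₀ π _

section WithColimit
variable {H₀ : Quiv.{u, u}} {α β : Cat.free.{u,u}.obj H₀ ⟶ Cat.free.{u,u}.obj G₀}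
lemma hw_flat (hw : α ≫ π = β ≫ π) : (α ≫ flat Q G₀ π) ≫ rho Q G₀ π = (β ≫ flat Q G₀ π) ≫ rho Q G₀ π := by
  rw [Category.assoc, Category.assoc, flat_rho]; exact hw

lemma pi_obj_surjective (hw : α ≫ π = β ≫ π) (hc : IsColimit (Cofork.ofπ π hw)) :
    ∀ x : ↥Q, ∃ v : ↥G₀, π.toFunctor.obj v = x := by
  set P : ↥Q → Prop := fun x => ∃ v : ↥G₀, π.toFunctor.obj v = x with hP
  let T : Cat.{u,u} := Cat.of (ObjectProperty.FullSubcategory P)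
  let π' : Cat.free.{u,u}.obj G₀ ⟶ T :=
    (ObjectProperty.lift P (π.toFunctor : Paths ↥G₀ ⥤ ↥Q) (fun X => ⟨X, rfl⟩)).toCatHom
  have h' : α ≫ π' = β ≫ π' := by
    apply free_hom_ext
    case hobj =>
      intro v
      have := catCongrObj hw v
      apply ObjectProperty.FullSubcategory.ext
      exact this
    case hmap =>
      intro a b e
      apply (ObjectProperty.ι P).map_injective
      erw [Functor.map_comp, Functor.map_comp, eqToHom_map, eqToHom_map]
      exact catCongrHom hw e.toPath
  let w : Q ⟶ T := Cofork.IsColimit.desc hc π' h'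
  have hw' : π ≫ w = π' := by
    have := Cofork.IsColimit.π_desc' hc π' h'
    simpa using this
  have hincl : π' ≫ ((ObjectProperty.ι P).toCatHom : T ⟶ Q) = π := rfl
  have hsplit : w ≫ ((ObjectProperty.ι P).toCatHom : T ⟶ Q) = 𝟙 Q := by
    apply Cofork.IsColimit.hom_ext hc
    simp only [Cofork.π_ofπ, ← Category.assoc]
    rw [hw', hincl]; exact (Category.comp_id π).symm
  intro x
  have hx := catCongrObj hsplit x
  simp only [Cat.Hom.id_obj] at hx
  obtain ⟨v, hv⟩ := (w.toFunctor.obj x).property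
  exact ⟨v, by rw [hv]; exact hx⟩

noncomputable def colim' (hw : α ≫ π = β ≫ π) (hc : IsColimit (Cofork.ofπ π hw)) :
    IsColimit (Cofork.ofπ (rho Q G₀ π) (hw_flat Q G₀ π hw)) := by
  refine Cofork.IsColimit.mk (Cofork.ofπ (rho Q G₀ π) (hw_flat Q G₀ π hw))
    (fun (s : Cofork (α ≫ flat Q G₀ π) (β ≫ flat Q G₀ π)) =>
      Cofork.IsColimit.desc hc (flat Q G₀ π ≫ s.π)
      (by rw [← Category.assoc, ← Category.assoc]; exact s.condition)) ?_ ?_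
  case refine_1 =>
    intro s
    have hD := Cofork.IsColimit.π_desc' hc (flat Q G₀ π ≫ s.π)
      (by rw [← Category.assoc, ← Category.assoc]; exact s.condition)
    simp only [Cofork.π_ofπ]
    apply free_hom_ext
    case hobj =>
      intro x
      obtain ⟨v, rfl⟩ := pi_obj_surjective Q G₀ π hw hc x
      exact catCongrObj hD v
    case hmap =>
      intro a b ar
      obtain ⟨va, vb, e, rfl, rfl⟩ := ar
      set D := Cofork.IsColimit.desc hc (flat Q G₀ π ≫ s.π)
        (by rw [← Category.assoc, ← Category.assoc]; exact s.condition) with hDdef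
      show D.toFunctor.map ((rho Q G₀ π).toFunctor.map (Quiver.Hom.toPath _)) = _
      refine (congrArg D.toFunctor.map (rho_map_toPath Q G₀ π _)).trans ?_
      simp only [eqToHom_refl, Category.id_comp, Category.comp_id]
      have h2 := catCongrHom hD e.toPath
      simp only [Cofork.π_ofπ] at h2
      show (π ≫ D).toFunctor.map e.toPath = _
      rw [h2]
      have h3 : (flat Q G₀ π ≫ s.π).toFunctor.map e.toPath =
          s.π.toFunctor.map (Quiver.Hom.toPath (V := GenVert Q G₀ π)
            (⟨va, vb, e, rfl, rfl⟩ : GenArrow Q G₀ π (π.toFunctor.obj va) (π.toFunctor.obj vb))) := by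
        show s.π.toFunctor.map ((flat Q G₀ π).toFunctor.map e.toPath) = _
        congr 1
      rw [h3]
      rfl
  case refine_2 =>
    intro s m hm
    have hD := Cofork.IsColimit.π_desc' hc (flat Q G₀ π ≫ s.π)
      (by rw [← Category.assoc, ← Category.assoc]; exact s.condition)
    simp only [Cofork.π_ofπ] at hm hD ⊢
    apply Cofork.IsColimit.hom_ext hc
    simp only [Cofork.π_ofπ]
    rw [hD]
    have hstep : π ≫ m = flat Q G₀ π ≫ (rho Q G₀ π ≫ m) := by
      rw [← Category.assoc, flat_rho]
    rw [hstep, hm]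

end WithColimit

/-- wide subcategory of `Q` generated by images of paths under `rho` -/
def SObj (_ : Cat.free.{u,u}.obj G₀ ⟶ Q) : Type u := Q

def SHom (x y : SObj Q G₀ π) : Type u :=
  {φ : @id ↥Q x ⟶ @id ↥Q y //
    ∃ p : @id (Paths (GenVert Q G₀ π)) x ⟶ @id (Paths (GenVert Q G₀ π)) y,
      (rho Q G₀ π).toFunctor.map p = φ}

instance : Category.{u} (SObj Q G₀ π) where
  Hom x y := SHom Q G₀ π x y
  id x := ⟨𝟙 _, ⟨𝟙 _, (rho Q G₀ π).toFunctor.map_id _⟩⟩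
  comp {x y z} f g := ⟨f.1 ≫ g.1, by
    obtain ⟨p, hp⟩ := f.2
    obtain ⟨q, hq⟩ := g.2
    exact ⟨p ≫ q, by erw [Functor.map_comp, hp, hq]; rfl⟩⟩
  id_comp f := by apply Subtype.ext; exact Category.id_comp f.1
  comp_id f := by apply Subtype.ext; exact Category.comp_id f.1
  assoc f g h := by apply Subtype.ext; exact Category.assoc f.1 g.1 h.1

def SCat : Cat.{u,u} := Cat.of (SObj Q G₀ π)

def sincl : SCat Q G₀ π ⟶ Q :=
  Functor.toCatHom (C := SObj Q G₀ π) (D := ↥Q)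
    { obj := fun x => x
      map := fun f => f.1
      map_id := fun _ => rfl
      map_comp := fun _ _ => rfl }

lemma eqToHom_val {x y : SObj Q G₀ π} (h : x = y) :
    (eqToHom h).val = eqToHom (show @id ↥Q x = @id ↥Q y from h) := by
  subst h; rfl

lemma scomp_val {x y z : ↥(SCat Q G₀ π)} (f : x ⟶ y) (g : y ⟶ z) :
    (f ≫ g).val = f.val ≫ g.val := rfl

lemma sext {x y : ↥(SCat Q G₀ π)} {f g : x ⟶ y} (h : f.val = g.val) : f = g := Subtype.ext h

lemma eqToHom_val' {x y : ↥(SCat Q G₀ π)} (h : x = y) :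
    (eqToHom h).val = eqToHom (show @id ↥Q x = @id ↥Q y from h) := by
  subst h; rfl

def rho'0 : @Prefunctor (GenVert Q G₀ π) _ (SObj Q G₀ π) (CategoryStruct.toQuiver) where
  obj x := x
  map {a b} ar := ⟨(rho0 Q G₀ π).map ar, ⟨ar.toPath, Paths.lift_toPath _ _⟩⟩

def rho' : Cat.free.{u,u}.obj (genQuiv Q G₀ π) ⟶ SCat Q G₀ π :=
  (Paths.lift (V := GenVert Q G₀ π) (rho'0 Q G₀ π)).toCatHom

lemma rho'_val : ∀ {x y : Paths (GenVert Q G₀ π)} (p : x ⟶ y),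
    ((rho' Q G₀ π).toFunctor.map p).val = (rho Q G₀ π).toFunctor.map p := by
  intro x y (p : @Quiver.Path (GenVert Q G₀ π) _ x y)
  induction p with
  | nil => rfl
  | cons p e ih =>
    show ((Paths.lift (rho'0 Q G₀ π)).map (Quiver.Path.cons p e)).val = _
    erw [Paths.lift_cons]
    show ((rho' Q G₀ π).toFunctor.map p).val ≫ ((rho'0 Q G₀ π).map e).val = _
    rw [ih]
    show _ = (Paths.lift (rho0 Q G₀ π)).map (Quiver.Path.cons p e)
    erw [Paths.lift_cons]
    rfl

lemma rho'_incl : rho' Q G₀ π ≫ sincl Q G₀ π = rho Q G₀ π := by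
  apply free_hom_ext
  case hobj => intro v; rfl
  case hmap =>
    intro a b e
    show ((rho' Q G₀ π).toFunctor.map e.toPath).val = _
    erw [rho'_val]
    exact eqToHom_conj_self _ _ _

section WithColimit2
variable {H₀ : Quiv.{u, u}} {α β : Cat.free.{u,u}.obj H₀ ⟶ Cat.free.{u,u}.obj G₀}

lemma hcoeq' (hw : α ≫ π = β ≫ π) :
    (α ≫ flat Q G₀ π) ≫ rho' Q G₀ π = (β ≫ flat Q G₀ π) ≫ rho' Q G₀ π := by
  apply free_hom_ext
  case hobj =>
    intro v
    exact catCongrObj (hw_flat Q G₀ π hw) v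
  case hmap =>
    intro a b e
    apply sext
    show ((rho' Q G₀ π).toFunctor.map ((α ≫ flat Q G₀ π).toFunctor.map e.toPath)).val = _
    erw [rho'_val]
    have h1 := catCongrHom (hw_flat Q G₀ π hw) e.toPath
    show ((α ≫ flat Q G₀ π) ≫ rho Q G₀ π).toFunctor.map e.toPath = _
    rw [h1]
    have hR : (((β ≫ flat Q G₀ π) ≫ rho' Q G₀ π).toFunctor.map e.toPath).val =
        ((β ≫ flat Q G₀ π) ≫ rho Q G₀ π).toFunctor.map e.toPath := rho'_val Q G₀ π _
    erw [scomp_val, scomp_val, eqToHom_val', eqToHom_val', hR]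
    rfl

lemma rho_full (hw : α ≫ π = β ≫ π) (hc : IsColimit (Cofork.ofπ π hw)) :
    ∀ (x y : ↥Q) (φ : x ⟶ y),
      ∃ p : @id (Paths (GenVert Q G₀ π)) x ⟶ @id (Paths (GenVert Q G₀ π)) y,
        (rho Q G₀ π).toFunctor.map p = φ := by
  have hcl := colim' Q G₀ π hw hc
  let w : Q ⟶ SCat Q G₀ π := Cofork.IsColimit.desc hcl (rho' Q G₀ π) (hcoeq' Q G₀ π hw)
  have hwr : rho Q G₀ π ≫ w = rho' Q G₀ π := by
    simpa using Cofork.IsColimit.π_desc' hcl (rho' Q G₀ π) (hcoeq' Q G₀ π hw)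
  have hretr : w ≫ sincl Q G₀ π = 𝟙 Q := by
    apply Cofork.IsColimit.hom_ext hcl
    simp only [Cofork.π_ofπ]
    rw [← Category.assoc, hwr, rho'_incl]
    exact (Category.comp_id _).symm
  intro x y φ
  have hx : ((w.toFunctor.obj x : SObj Q G₀ π) : ↥Q) = x := by
    have := catCongrObj hretr x
    exact this
  have hy : ((w.toFunctor.obj y : SObj Q G₀ π) : ↥Q) = y := by
    have := catCongrObj hretr y
    exact this
  have hφ := catCongrHom hretr φ
  simp only [Cat.Hom.id_map] at hφ
  obtain ⟨p, hp⟩ := (w.toFunctor.map φ).2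
  refine ⟨eqToHom (show @id (Paths (GenVert Q G₀ π)) x = w.toFunctor.obj x from hx.symm) ≫ p ≫
    eqToHom (show (w.toFunctor.obj y : Paths (GenVert Q G₀ π)) = y from hy), ?_⟩
  erw [Functor.map_comp, Functor.map_comp, eqToHom_map, eqToHom_map, hp]
  have hval : (w.toFunctor.map φ).val = (w ≫ sincl Q G₀ π).toFunctor.map φ := rfl
  rw [hval, hφ]
  exact eqToHom_sandwich _ _ _ _ _

end WithColimit2
end Part2

section SumQ
variable (A B : Quiv.{u,u})

def SumV : Type u := ↥A ⊕ ↥B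

def SumHom : SumV A B → SumV A B → Type u
  | Sum.inl a, Sum.inl b => a ⟶ b
  | Sum.inr a, Sum.inr b => a ⟶ b
  | _, _ => PEmpty

instance : Quiver.{u} (SumV A B) := ⟨SumHom A B⟩

def sumQuiv : Quiv.{u,u} := Quiv.of (SumV A B)

def inlP : A ⟶ sumQuiv A B where
  obj a := Sum.inl a
  map {a b} e := (e : SumHom A B (Sum.inl a) (Sum.inl b))

def inrP : B ⟶ sumQuiv A B where
  obj a := Sum.inr a
  map {a b} e := (e : SumHom A B (Sum.inr a) (Sum.inr b))

def inlQ : Cat.free.{u,u}.obj A ⟶ Cat.free.{u,u}.obj (sumQuiv A B) := Cat.free.map (inlP A B)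
def inrQ : Cat.free.{u,u}.obj B ⟶ Cat.free.{u,u}.obj (sumQuiv A B) := Cat.free.map (inrP A B)

variable {A B} {T : Cat.{u,u}}

def sumDescP (FA : Cat.free.{u,u}.obj A ⟶ T) (FB : Cat.free.{u,u}.obj B ⟶ T) :
    @Prefunctor (SumV A B) _ T (CategoryStruct.toQuiver) where
  obj x := match x with
    | Sum.inl a => FA.toFunctor.obj a
    | Sum.inr b => FB.toFunctor.obj b
  map {x y} e := match x, y, e with
    | Sum.inl a, Sum.inl b, e => FA.toFunctor.map (Quiver.Hom.toPath (show a ⟶ b from e))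
    | Sum.inr a, Sum.inr b, e => FB.toFunctor.map (Quiver.Hom.toPath (show a ⟶ b from e))
    | Sum.inl _, Sum.inr _, e => PEmpty.elim e
    | Sum.inr _, Sum.inl _, e => PEmpty.elim e

def sumDesc (FA : Cat.free.{u,u}.obj A ⟶ T) (FB : Cat.free.{u,u}.obj B ⟶ T) :
    Cat.free.{u,u}.obj (sumQuiv A B) ⟶ T :=
  (Paths.lift (V := SumV A B) (sumDescP FA FB)).toCatHom

lemma sumDesc_inl (FA : Cat.free.{u,u}.obj A ⟶ T) (FB : Cat.free.{u,u}.obj B ⟶ T) :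
    inlQ A B ≫ sumDesc FA FB = FA := by
  apply free_hom_ext
  case hobj => intro v; rfl
  case hmap =>
    intro a b e
    show (sumDesc FA FB).toFunctor.map ((inlQ A B).toFunctor.map e.toPath) = _
    have h1 : (inlQ A B).toFunctor.map e.toPath =
        Quiver.Hom.toPath (V := SumV A B) (show SumHom A B (Sum.inl a) (Sum.inl b) from e) := by
      show (inlP A B).mapPath e.toPath = _
      rw [Prefunctor.mapPath_toPath]
      rfl
    rw [h1]
    show (Paths.lift (sumDescP FA FB)).map _ = _
    erw [Paths.lift_toPath]
    show FA.toFunctor.map e.toPath = _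
    exact eqToHom_conj_self _ _ _

lemma sumDesc_inr (FA : Cat.free.{u,u}.obj A ⟶ T) (FB : Cat.free.{u,u}.obj B ⟶ T) :
    inrQ A B ≫ sumDesc FA FB = FB := by
  apply free_hom_ext
  case hobj => intro v; rfl
  case hmap =>
    intro a b e
    show (sumDesc FA FB).toFunctor.map ((inrQ A B).toFunctor.map e.toPath) = _
    have h1 : (inrQ A B).toFunctor.map e.toPath =
        Quiver.Hom.toPath (V := SumV A B) (show SumHom A B (Sum.inr a) (Sum.inr b) from e) := by
      show (inrP A B).mapPath e.toPath = _
      rw [Prefunctor.mapPath_toPath]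
      rfl
    rw [h1]
    show (Paths.lift (sumDescP FA FB)).map _ = _
    erw [Paths.lift_toPath]
    show FB.toFunctor.map e.toPath = _
    exact eqToHom_conj_self _ _ _

lemma sum_hom_ext {F G : Cat.free.{u,u}.obj (sumQuiv A B) ⟶ T}
    (hl : inlQ A B ≫ F = inlQ A B ≫ G) (hr : inrQ A B ≫ F = inrQ A B ≫ G) : F = G := by
  apply free_hom_ext
  case hobj =>
    intro v
    match v with
    | Sum.inl a => exact catCongrObj hl a
    | Sum.inr b => exact catCongrObj hr b
  case hmap =>
    intro a b e
    match a, b, e with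
    | Sum.inl a, Sum.inl b, e =>
      have h1 : (inlQ A B).toFunctor.map (Quiver.Hom.toPath (show a ⟶ b from e)) =
          Quiver.Hom.toPath (V := SumV A B) (show SumHom A B (Sum.inl a) (Sum.inl b) from e) := by
        show (inlP A B).mapPath _ = _
        rw [Prefunctor.mapPath_toPath]
        rfl
      have h2 := catCongrHom hl (Quiver.Hom.toPath (show a ⟶ b from e))
      show F.toFunctor.map _ = _
      erw [← h1]
      show (inlQ A B ≫ F).toFunctor.map _ = _
      rw [h2]
      have h3 : (inlQ A B ≫ G).toFunctor.map (Quiver.Hom.toPath (show a ⟶ b from e)) =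
          G.toFunctor.map (Quiver.Hom.toPath (V := SumV A B)
            (show SumHom A B (Sum.inl a) (Sum.inl b) from e)) := by
        show G.toFunctor.map ((inlQ A B).toFunctor.map _) = _
        exact congrArg G.toFunctor.map h1
      rw [h3]
      rfl
    | Sum.inr a, Sum.inr b, e =>
      have h1 : (inrQ A B).toFunctor.map (Quiver.Hom.toPath (show a ⟶ b from e)) =
          Quiver.Hom.toPath (V := SumV A B) (show SumHom A B (Sum.inr a) (Sum.inr b) from e) := by
        show (inrP A B).mapPath _ = _
        rw [Prefunctor.mapPath_toPath]
        rfl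
      have h2 := catCongrHom hr (Quiver.Hom.toPath (show a ⟶ b from e))
      show F.toFunctor.map _ = _
      erw [← h1]
      show (inrQ A B ≫ F).toFunctor.map _ = _
      rw [h2]
      have h3 : (inrQ A B ≫ G).toFunctor.map (Quiver.Hom.toPath (show a ⟶ b from e)) =
          G.toFunctor.map (Quiver.Hom.toPath (V := SumV A B)
            (show SumHom A B (Sum.inr a) (Sum.inr b) from e)) := by
        show G.toFunctor.map ((inrQ A B).toFunctor.map _) = _
        exact congrArg G.toFunctor.map h1
      rw [h3]
      rfl
    | Sum.inl _, Sum.inr _, e => exact (PEmpty.elim e)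
    | Sum.inr _, Sum.inl _, e => exact (PEmpty.elim e)

end SumQ


section PathLift
variable (Q : Cat.{u, u}) (G₀ : Quiv.{u, u}) (π : Cat.free.{u,u}.obj G₀ ⟶ Q)

/-- abbreviation for the fullness statement -/
def RhoFull : Prop :=
  ∀ (x y : ↥Q) (φ : x ⟶ y),
      ∃ p : @id (Paths (GenVert Q G₀ π)) x ⟶ @id (Paths (GenVert Q G₀ π)) y,
        (rho Q G₀ π).toFunctor.map p = φ

noncomputable def pathLift (full : RhoFull Q G₀ π) {GP : Quiv.{u,u}}
    (K : Cat.free.{u,u}.obj GP ⟶ Q) :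
    Cat.free.{u,u}.obj GP ⟶ Cat.free.{u,u}.obj (genQuiv Q G₀ π) :=
  (Paths.lift (V := ↥GP) (C := Paths (GenVert Q G₀ π))
    { obj := fun v => K.toFunctor.obj v
      map := fun {a b} e => (full (K.toFunctor.obj a) (K.toFunctor.obj b) (K.toFunctor.map e.toPath)).choose }).toCatHom

lemma pathLift_rho (full : RhoFull Q G₀ π) {GP : Quiv.{u,u}}
    (K : Cat.free.{u,u}.obj GP ⟶ Q) :
    pathLift Q G₀ π full K ≫ rho Q G₀ π = K := by
  apply free_hom_ext
  case hobj => intro v; rfl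
  case hmap =>
    intro a b e
    show (rho Q G₀ π).toFunctor.map ((pathLift Q G₀ π full K).toFunctor.map e.toPath) = _
    have h1 : (pathLift Q G₀ π full K).toFunctor.map e.toPath =
        (full (K.toFunctor.obj a) (K.toFunctor.obj b) (K.toFunctor.map e.toPath)).choose := Paths.lift_toPath _ _
    erw [h1, (full (K.toFunctor.obj a) (K.toFunctor.obj b) (K.toFunctor.map e.toPath)).choose_spec]
    exact eqToHom_conj_self _ _ _

lemma finite_target {H₀ : Quiv.{u,u}} {α β : Cat.free.{u,u}.obj H₀ ⟶ Cat.free.{u,u}.obj G₀}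
    (hw : α ≫ π = β ≫ π) (hc : IsColimit (Cofork.ofπ π hw)) (finG₀ : FiniteQuiv G₀) :
    Finite ↥Q := by
  have : Finite ↥G₀ := finG₀.1
  exact Finite.of_surjective (fun v : ↥G₀ => π.toFunctor.obj v)
    (fun x => (pi_obj_surjective Q G₀ π hw hc x).imp (fun v hv => hv))

lemma finiteQuiv_genQuiv (finG₀ : FiniteQuiv G₀) (hfinQ : Finite ↥Q) :
    FiniteQuiv (genQuiv Q G₀ π) := by
  constructor
  · exact hfinQ
  · have : Finite (Σ a b : ↥G₀, a ⟶ b) := finG₀.2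
    apply Finite.of_injective
      (f := fun t : Σ x y : ↥(genQuiv Q G₀ π), x ⟶ y =>
        (⟨t.2.2.a, t.2.2.b, t.2.2.e⟩ : Σ a b : ↥G₀, a ⟶ b))
    rintro ⟨x, y, ⟨a, b, e, rfl, rfl⟩⟩ ⟨x', y', ⟨a', b', e', rfl, rfl⟩⟩ h
    simp only at h
    obtain ⟨rfl, h⟩ := Sigma.mk.inj_iff.mp h
    obtain ⟨rfl, h⟩ := Sigma.mk.inj_iff.mp (eq_of_heq h)
    obtain rfl := eq_of_heq h
    rfl

end PathLift

lemma finiteQuiv_sumQuiv {A B : Quiv.{u,u}} (hA : FiniteQuiv A) (hB : FiniteQuiv B) :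
    FiniteQuiv (sumQuiv A B) := by
  have h1 : Finite ↥A := hA.1
  have h2 : Finite ↥B := hB.1
  have h3 : Finite (Σ a b : ↥A, a ⟶ b) := hA.2
  have h4 : Finite (Σ a b : ↥B, a ⟶ b) := hB.2
  constructor
  · show Finite (↥A ⊕ ↥B)
    infer_instance
  · apply Finite.of_surjective
      (f := fun t : (Σ a b : ↥A, a ⟶ b) ⊕ (Σ a b : ↥B, a ⟶ b) =>
        match t with
        | Sum.inl ⟨a, b, e⟩ =>
          (⟨Sum.inl a, Sum.inl b, e⟩ : Σ x y : ↥(sumQuiv A B), x ⟶ y)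
        | Sum.inr ⟨a, b, e⟩ =>
          (⟨Sum.inr a, Sum.inr b, e⟩ : Σ x y : ↥(sumQuiv A B), x ⟶ y))
    rintro ⟨x, y, e⟩
    match x, y, e with
    | Sum.inl a, Sum.inl b, e => exact ⟨Sum.inl ⟨a, b, e⟩, rfl⟩
    | Sum.inr a, Sum.inr b, e => exact ⟨Sum.inr ⟨a, b, e⟩, rfl⟩
    | Sum.inl a, Sum.inr b, e => exact (PEmpty.elim e)
    | Sum.inr a, Sum.inl b, e => exact (PEmpty.elim e)

lemma part2_main {P Q : Cat.{u,u}} (hP : HasFinitePresentation P) (hQ : HasFinitePresentation Q)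
    (f g : P ⟶ Q) (c : Cofork f g) (hcc : IsColimit c) : HasFinitePresentation c.pt := by
  obtain ⟨HP, GP, finHP, finGP, αP, βP, qP, hwP, ⟨hcP⟩⟩ := hP
  obtain ⟨H₀, G₀, finH₀, finG₀, α, β, π, hw, ⟨hc⟩⟩ := hQ
  have full : RhoFull Q G₀ π := rho_full Q G₀ π hw hc
  have hfinQ : Finite ↥Q := finite_target Q G₀ π hw hc finG₀
  have hepi : Epi qP := by
    have h := epi_of_cofork hcP
    simpa using h
  set f' : Cat.free.{u,u}.obj GP ⟶ Q := qP ≫ f with hf'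
  set g' : Cat.free.{u,u}.obj GP ⟶ Q := qP ≫ g with hg'
  set LF := pathLift Q G₀ π full f' with hLFdef
  set LG := pathLift Q G₀ π full g' with hLGdef
  have hLF : LF ≫ rho Q G₀ π = f' := pathLift_rho Q G₀ π full f'
  have hLG : LG ≫ rho Q G₀ π = g' := pathLift_rho Q G₀ π full g'
  set A' := sumDesc (α ≫ flat Q G₀ π) LF with hA'def
  set B' := sumDesc (β ≫ flat Q G₀ π) LG with hB'def
  set σ := rho Q G₀ π ≫ c.π with hσdef
  have hfg : f' ≫ c.π = g' ≫ c.π := by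
    rw [hf', hg', Category.assoc, Category.assoc, c.condition]
  have hinlA : inlQ H₀ GP ≫ A' = α ≫ flat Q G₀ π := by rw [hA'def]; exact sumDesc_inl _ _
  have hinrA : inrQ H₀ GP ≫ A' = LF := by rw [hA'def]; exact sumDesc_inr _ _
  have hinlB : inlQ H₀ GP ≫ B' = β ≫ flat Q G₀ π := by rw [hB'def]; exact sumDesc_inl _ _
  have hinrB : inrQ H₀ GP ≫ B' = LG := by rw [hB'def]; exact sumDesc_inr _ _
  have hcond : A' ≫ σ = B' ≫ σ := by
    apply sum_hom_ext
    · calc inlQ H₀ GP ≫ A' ≫ σ = (inlQ H₀ GP ≫ A') ≫ σ := (Category.assoc _ _ _).symm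
        _ = (α ≫ flat Q G₀ π) ≫ σ := by rw [hinlA]
        _ = ((α ≫ flat Q G₀ π) ≫ rho Q G₀ π) ≫ c.π := by
            rw [hσdef]; exact (Category.assoc _ _ _).symm
        _ = ((β ≫ flat Q G₀ π) ≫ rho Q G₀ π) ≫ c.π := by rw [hw_flat Q G₀ π hw]
        _ = (β ≫ flat Q G₀ π) ≫ σ := by rw [hσdef]; exact Category.assoc _ _ _
        _ = (inlQ H₀ GP ≫ B') ≫ σ := by rw [hinlB]
        _ = inlQ H₀ GP ≫ B' ≫ σ := Category.assoc _ _ _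
    · calc inrQ H₀ GP ≫ A' ≫ σ = (inrQ H₀ GP ≫ A') ≫ σ := (Category.assoc _ _ _).symm
        _ = LF ≫ σ := by rw [hinrA]
        _ = (LF ≫ rho Q G₀ π) ≫ c.π := by rw [hσdef]; exact (Category.assoc _ _ _).symm
        _ = f' ≫ c.π := by rw [hLF]
        _ = g' ≫ c.π := hfg
        _ = (LG ≫ rho Q G₀ π) ≫ c.π := by rw [hLG]
        _ = LG ≫ σ := by rw [hσdef]; exact Category.assoc _ _ _
        _ = (inrQ H₀ GP ≫ B') ≫ σ := by rw [hinrB]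
        _ = inrQ H₀ GP ≫ B' ≫ σ := Category.assoc _ _ _
  have hcolim : IsColimit (Cofork.ofπ σ hcond) := by
    apply Cofork.IsColimit.mk'
    intro s
    have hθ1 : (α ≫ flat Q G₀ π) ≫ s.π = (β ≫ flat Q G₀ π) ≫ s.π := by
      calc (α ≫ flat Q G₀ π) ≫ s.π = (inlQ H₀ GP ≫ A') ≫ s.π := by rw [hinlA]
        _ = inlQ H₀ GP ≫ A' ≫ s.π := Category.assoc _ _ _
        _ = inlQ H₀ GP ≫ B' ≫ s.π := by rw [s.condition]
        _ = (inlQ H₀ GP ≫ B') ≫ s.π := (Category.assoc _ _ _).symm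
        _ = (β ≫ flat Q G₀ π) ≫ s.π := by rw [hinlB]
    set w := Cofork.IsColimit.desc (colim' Q G₀ π hw hc) s.π hθ1 with hwdef
    have hwθ : rho Q G₀ π ≫ w = s.π := by
      have := Cofork.IsColimit.π_desc' (colim' Q G₀ π hw hc) s.π hθ1
      simpa using this
    have hθ2 : f ≫ w = g ≫ w := by
      have h1 : f' ≫ w = g' ≫ w := by
        calc f' ≫ w = (LF ≫ rho Q G₀ π) ≫ w := by rw [hLF]
          _ = LF ≫ rho Q G₀ π ≫ w := Category.assoc _ _ _
          _ = LF ≫ s.π := by rw [hwθ]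
          _ = (inrQ H₀ GP ≫ A') ≫ s.π := by rw [hinrA]
          _ = inrQ H₀ GP ≫ A' ≫ s.π := Category.assoc _ _ _
          _ = inrQ H₀ GP ≫ B' ≫ s.π := by rw [s.condition]
          _ = (inrQ H₀ GP ≫ B') ≫ s.π := (Category.assoc _ _ _).symm
          _ = LG ≫ s.π := by rw [hinrB]
          _ = LG ≫ rho Q G₀ π ≫ w := by rw [hwθ]
          _ = (LG ≫ rho Q G₀ π) ≫ w := (Category.assoc _ _ _).symm
          _ = g' ≫ w := by rw [hLG]
      rw [hf', hg', Category.assoc, Category.assoc] at h1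
      exact (cancel_epi qP).mp h1
    refine ⟨Cofork.IsColimit.desc hcc w hθ2, ?_, ?_⟩
    · have hm : c.π ≫ Cofork.IsColimit.desc hcc w hθ2 = w := Cofork.IsColimit.π_desc' hcc w hθ2
      show σ ≫ Cofork.IsColimit.desc hcc w hθ2 = s.π
      rw [hσdef, Category.assoc, hm, hwθ]
    · intro m hm
      have hm' : σ ≫ m = s.π := hm
      have h2 : rho Q G₀ π ≫ (c.π ≫ m) = rho Q G₀ π ≫ w := by
        have : (rho Q G₀ π ≫ c.π) ≫ m = s.π := by rw [← hσdef]; exact hm'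
        rw [← Category.assoc, this, hwθ]
      have h3 : c.π ≫ m = w := Cofork.IsColimit.hom_ext (colim' Q G₀ π hw hc) (by simpa using h2)
      apply Cofork.IsColimit.hom_ext hcc
      show c.π ≫ m = c.π ≫ Cofork.IsColimit.desc hcc w hθ2
      rw [h3]
      exact (Cofork.IsColimit.π_desc' hcc w hθ2).symm
  exact ⟨sumQuiv H₀ GP, genQuiv Q G₀ π, finiteQuiv_sumQuiv finH₀ finGP,
    finiteQuiv_genQuiv Q G₀ π finG₀ hfinQ, A', B', σ, hcond, ⟨hcolim⟩⟩

section SigQ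
variable {ι : Type u} (V : ι → Quiv.{u,u})

def SigV : Type u := Σ i, ↥(V i)

inductive SigHom : SigV V → SigV V → Type u
  | mk {i : ι} {a b : ↥(V i)} (e : a ⟶ b) : SigHom ⟨i, a⟩ ⟨i, b⟩

instance : Quiver.{u} (SigV V) := ⟨SigHom V⟩

def sigQuiv : Quiv.{u,u} := Quiv.of (SigV V)

def inP (i : ι) : V i ⟶ sigQuiv V where
  obj a := ⟨i, a⟩
  map e := SigHom.mk e

def inQ (i : ι) : Cat.free.{u,u}.obj (V i) ⟶ Cat.free.{u,u}.obj (sigQuiv V) :=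
  Cat.free.map (inP V i)

variable {T : Cat.{u,u}}

def sigDescP (F : ∀ i, Cat.free.{u,u}.obj (V i) ⟶ T) :
    @Prefunctor (SigV V) _ T (CategoryStruct.toQuiver) where
  obj x := (F x.1).toFunctor.obj x.2
  map {x y} e := match x, y, e with
    | _, _, SigHom.mk (i := i) e => (F i).toFunctor.map e.toPath

def sigDesc (F : ∀ i, Cat.free.{u,u}.obj (V i) ⟶ T) :
    Cat.free.{u,u}.obj (sigQuiv V) ⟶ T :=
  (Paths.lift (V := SigV V) (sigDescP V F)).toCatHom

lemma sigDesc_in (F : ∀ i, Cat.free.{u,u}.obj (V i) ⟶ T) (i : ι) :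
    inQ V i ≫ sigDesc V F = F i := by
  apply free_hom_ext
  case hobj => intro v; rfl
  case hmap =>
    intro a b e
    show (sigDesc V F).toFunctor.map ((inQ V i).toFunctor.map e.toPath) = _
    have h1 : (inQ V i).toFunctor.map e.toPath =
        Quiver.Hom.toPath (V := SigV V) (SigHom.mk e) := by
      show (inP V i).mapPath e.toPath = _
      rw [Prefunctor.mapPath_toPath]
      rfl
    rw [h1]
    show (Paths.lift (sigDescP V F)).map _ = _
    erw [Paths.lift_toPath]
    show (F i).toFunctor.map e.toPath = _
    exact eqToHom_conj_self _ _ _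

lemma sig_hom_ext {F G : Cat.free.{u,u}.obj (sigQuiv V) ⟶ T}
    (h : ∀ i, inQ V i ≫ F = inQ V i ≫ G) : F = G := by
  apply free_hom_ext
  case hobj =>
    rintro ⟨i, v⟩
    exact catCongrObj (h i) v
  case hmap =>
    intro a b e
    match a, b, e with
    | _, _, SigHom.mk (i := i) (a := a) (b := b) e =>
      have h1 : (inQ V i).toFunctor.map (Quiver.Hom.toPath e) =
          Quiver.Hom.toPath (V := SigV V) (SigHom.mk e) := by
        show (inP V i).mapPath e.toPath = _
        rw [Prefunctor.mapPath_toPath]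
        rfl
      have h2 := catCongrHom (h i) (Quiver.Hom.toPath e)
      show F.toFunctor.map _ = _
      erw [← h1]
      show (inQ V i ≫ F).toFunctor.map _ = _
      rw [h2]
      have h3 : (inQ V i ≫ G).toFunctor.map (Quiver.Hom.toPath e) =
          G.toFunctor.map (Quiver.Hom.toPath (V := SigV V) (SigHom.mk e)) := by
        show G.toFunctor.map ((inQ V i).toFunctor.map _) = _
        exact congrArg G.toFunctor.map h1
      rw [h3]
      rfl

lemma finiteQuiv_sigQuiv (hι : Finite ι) (h : ∀ i, FiniteQuiv (V i)) :
    FiniteQuiv (sigQuiv V) := by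
  haveI h1 : ∀ i, Finite ↥(V i) := fun i => (h i).1
  haveI h2 : ∀ i, Finite (Σ a b : ↥(V i), a ⟶ b) := fun i => (h i).2
  constructor
  · show Finite (Σ i, ↥(V i))
    infer_instance
  · apply Finite.of_surjective
      (f := fun t : Σ i, Σ a b : ↥(V i), a ⟶ b =>
        (⟨⟨t.1, t.2.1⟩, ⟨t.1, t.2.2.1⟩, SigHom.mk t.2.2.2⟩ : Σ x y : ↥(sigQuiv V), x ⟶ y))
    rintro ⟨x, y, e⟩
    match x, y, e with
    | _, _, SigHom.mk (i := i) (a := a) (b := b) e => exact ⟨⟨i, a, b, e⟩, rfl⟩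

end SigQ

lemma part1_main (ι : Type u) (hι : Finite ι) (P : ι → Cat.{u, u})
    (hP : ∀ i, HasFinitePresentation (P i)) (c : Cofan P) (hcf : IsColimit c) :
    HasFinitePresentation c.pt := by
  choose H G finH finG hrest using hP
  choose α β q hwq hcolim using hrest
  have hc : ∀ i, IsColimit (Cofork.ofπ (q i) (hwq i)) := fun i => (hcolim i).some
  set A' := sigDesc H (fun i => α i ≫ inQ G i) with hA'def
  set B' := sigDesc H (fun i => β i ≫ inQ G i) with hB'def
  set q' := sigDesc G (fun i => q i ≫ c.inj i) with hq'def
  have hinA : ∀ i, inQ H i ≫ A' = α i ≫ inQ G i := fun i => by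
    rw [hA'def]; exact sigDesc_in _ _ _
  have hinB : ∀ i, inQ H i ≫ B' = β i ≫ inQ G i := fun i => by
    rw [hB'def]; exact sigDesc_in _ _ _
  have hinq : ∀ i, inQ G i ≫ q' = q i ≫ c.inj i := fun i => by
    rw [hq'def]; exact sigDesc_in _ _ _
  have hw' : A' ≫ q' = B' ≫ q' := by
    apply sig_hom_ext
    intro i
    calc inQ H i ≫ A' ≫ q' = (inQ H i ≫ A') ≫ q' := (Category.assoc _ _ _).symm
      _ = (α i ≫ inQ G i) ≫ q' := by rw [hinA]
      _ = α i ≫ inQ G i ≫ q' := Category.assoc _ _ _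
      _ = α i ≫ q i ≫ c.inj i := by rw [hinq]
      _ = (α i ≫ q i) ≫ c.inj i := (Category.assoc _ _ _).symm
      _ = (β i ≫ q i) ≫ c.inj i := by rw [hwq i]
      _ = β i ≫ q i ≫ c.inj i := Category.assoc _ _ _
      _ = β i ≫ inQ G i ≫ q' := by rw [hinq]
      _ = (β i ≫ inQ G i) ≫ q' := (Category.assoc _ _ _).symm
      _ = (inQ H i ≫ B') ≫ q' := by rw [hinB]
      _ = inQ H i ≫ B' ≫ q' := Category.assoc _ _ _
  have hcolim' : IsColimit (Cofork.ofπ q' hw') := by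
    apply Cofork.IsColimit.mk'
    intro s
    have hti : ∀ i, (α i) ≫ (inQ G i ≫ s.π) = (β i) ≫ (inQ G i ≫ s.π) := by
      intro i
      calc α i ≫ inQ G i ≫ s.π = (α i ≫ inQ G i) ≫ s.π := (Category.assoc _ _ _).symm
        _ = (inQ H i ≫ A') ≫ s.π := by rw [hinA]
        _ = inQ H i ≫ A' ≫ s.π := Category.assoc _ _ _
        _ = inQ H i ≫ B' ≫ s.π := by rw [s.condition]
        _ = (inQ H i ≫ B') ≫ s.π := (Category.assoc _ _ _).symm
        _ = (β i ≫ inQ G i) ≫ s.π := by rw [hinB]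
        _ = β i ≫ inQ G i ≫ s.π := Category.assoc _ _ _
    set w : ∀ i, P i ⟶ s.pt := fun i =>
      Cofork.IsColimit.desc (hc i) (inQ G i ≫ s.π) (hti i) with hwdef
    have hwi : ∀ i, q i ≫ w i = inQ G i ≫ s.π := fun i => by
      have := Cofork.IsColimit.π_desc' (hc i) (inQ G i ≫ s.π) (hti i)
      rw [hwdef]
      simpa using this
    set m := hcf.desc (Cofan.mk s.pt w) with hmdef
    have hm : ∀ i, c.inj i ≫ m = w i := fun i => by
      rw [hmdef]
      exact hcf.fac (Cofan.mk s.pt w) ⟨i⟩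
    refine ⟨m, ?_, ?_⟩
    · show q' ≫ m = s.π
      apply sig_hom_ext
      intro i
      calc inQ G i ≫ q' ≫ m = (inQ G i ≫ q') ≫ m := (Category.assoc _ _ _).symm
        _ = (q i ≫ c.inj i) ≫ m := by rw [hinq]
        _ = q i ≫ c.inj i ≫ m := Category.assoc _ _ _
        _ = q i ≫ w i := by rw [hm]
        _ = inQ G i ≫ s.π := hwi i
    · intro m' hm'
      have hm'' : q' ≫ m' = s.π := hm'
      have hstep : ∀ i, c.inj i ≫ m' = w i := by
        intro i
        apply Cofork.IsColimit.hom_ext (hc i)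
        simp only [Cofork.π_ofπ]
        calc q i ≫ c.inj i ≫ m' = (q i ≫ c.inj i) ≫ m' := (Category.assoc _ _ _).symm
          _ = (inQ G i ≫ q') ≫ m' := by rw [hinq]
          _ = inQ G i ≫ q' ≫ m' := Category.assoc _ _ _
          _ = inQ G i ≫ s.π := by rw [hm'']
          _ = q i ≫ w i := (hwi i).symm
      apply IsColimit.hom_ext hcf
      rintro ⟨i⟩
      have h1 : c.ι.app ⟨i⟩ ≫ m' = c.inj i ≫ m' := rfl
      have h2 : c.ι.app ⟨i⟩ ≫ m = c.inj i ≫ m := rfl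
      rw [h1, h2, hstep i, hm i]
  exact ⟨sigQuiv H, sigQuiv G, finiteQuiv_sigQuiv H hι finH, finiteQuiv_sigQuiv G hι finG,
    A', B', q', hw', ⟨hcolim'⟩⟩

theorem hasFinitePresentation_stable_under_finite_colimits :
    (∀ (ι : Type u) (_ : Finite ι) (P : ι → Cat.{u, u}),
      (∀ i, HasFinitePresentation (P i)) →
        ∀ (c : Cofan P), IsColimit c → HasFinitePresentation c.pt) ∧
    (∀ (P Q : Cat.{u, u}),
      HasFinitePresentation P → HasFinitePresentation Q →
        ∀ (f g : P ⟶ Q) (c : Cofork f g), IsColimit c → HasFinitePresentation c.pt) := by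
  constructor
  · exact part1_main
  · intro P Q hP hQ f g c hcc
    exact part2_main hP hQ f g c hcc
end

section
/- The forgetful functor from the category Grpd of small groupoids to the category Quiv of small quivers is monadic: it has a left adjoint (the free groupoid functor), and the comparison functor from Grpd to the Eilenberg–Moore category of algebras for the induced monad on Quiv is an equivalence of categories. -/
/-!
The forgetful functor from the category `Grpd` of small groupoids to the category
`Quiv` of small quivers is monadic: it has a left adjoint (the free groupoid functor),
and the comparison functor from `Grpd` to the Eilenberg–Moore category of algebras for
the induced monad on `Quiv` is an equivalence of categories.
-/

open CategoryTheory Groupoid Quiver.FreeGroupoid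

universe u

namespace GrpdMonadic

/-! ### Cast machinery for quiver homs -/

section hc
variable {C : Type*} [Quiver C] {D : Type*} [Quiver D]

/-- Transport a hom along equalities of endpoints. -/
def hc {X X' Y Y' : C} (hX : X = X') (hY : Y = Y') (f : X ⟶ Y) : X' ⟶ Y' :=
  hY ▸ hX ▸ f

@[simp]
lemma hc_self {X Y : C} (hX : X = X) (hY : Y = Y) (f : X ⟶ Y) : hc hX hY f = f := rfl

lemma hc_hc {X X' X'' Y Y' Y'' : C} (h1 : X = X') (h2 : Y = Y') (h3 : X' = X'')
    (h4 : Y' = Y'') (f : X ⟶ Y) :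
    hc h3 h4 (hc h1 h2 f) = hc (h1.trans h3) (h2.trans h4) f := by
  subst h1; subst h2; subst h3; subst h4; rfl

lemma map_hc (F : C ⥤q D) {X X' Y Y' : C} (hX : X = X') (hY : Y = Y') (f : X ⟶ Y) :
    F.map (hc hX hY f) = hc (congrArg F.obj hX) (congrArg F.obj hY) (F.map f) := by
  subst hX; subst hY; rfl

/-- Object-level equality extracted from an equality of prefunctors. -/
lemma pobj {F G : C ⥤q D} (h : F = G) (X : C) : F.obj X = G.obj X := by rw [h]

/-- Hom-level consequence of an equality of prefunctors. -/
lemma pcongr {F G : C ⥤q D} (h : F = G) {X Y : C} (f : X ⟶ Y) :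
    G.map f = hc (pobj h X) (pobj h Y) (F.map f) := by
  subst h; rfl

lemma hc_flip {X X' Y Y' : C} {h1 : X = X'} {h2 : Y = Y'} {f : X ⟶ Y} {g : X' ⟶ Y'}
    (H : g = hc h1 h2 f) : f = hc h1.symm h2.symm g := by
  subst h1; subst h2; simpa using H.symm
end hc

section hcCat
variable {C : Type*} [CategoryStruct C]

lemma comp_hc_hc {X X' Y Y' Z Z' : C} (h1 : X = X') (h2 : Y = Y') (h3 : Z = Z')
    (f : X ⟶ Y) (g : Y ⟶ Z) :
    hc h1 h2 f ≫ hc h2 h3 g = hc h1 h3 (f ≫ g) := by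
  subst h1; subst h2; subst h3; rfl

lemma hc_id {X Y : C} (h : X = Y) : hc h h (𝟙 X) = 𝟙 Y := by subst h; rfl
end hcCat

lemma inv_hc {C : Type*} [Groupoid C] {X X' Y Y' : C} (hX : X = X') (hY : Y = Y')
    (f : X ⟶ Y) :
    Groupoid.inv (hc hX hY f) = hc hY hX (Groupoid.inv f) := by
  subst hX; subst hY; rfl

lemma map_ginv {C D : Type*} [Groupoid C] [Groupoid D] (F : C ⥤ D) {X Y : C} (f : X ⟶ Y) :
    F.map (Groupoid.inv f) = Groupoid.inv (F.map f) := by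
  rw [Groupoid.inv_eq_inv, Groupoid.inv_eq_inv, F.map_inv f]

/-! ### Promoting a prefunctor to a functor -/

/-- If a prefunctor `p : C ⥤q D` between categories is intertwined with a functor `L : E ⥤ D`
along a functor `π : E ⥤ C` which admits a prefunctor section `s`, then `p` is functorial. -/
def functorOfSection {C D E : Type*} [Category C] [Category D] [Category E]
    (π : E ⥤ C) (s : C ⥤q E) (hs : s ⋙q π.toPrefunctor = 𝟭q C)
    (p : C ⥤q D) (L : E ⥤ D) (h : π.toPrefunctor ⋙q p = L.toPrefunctor) : C ⥤ D where
  obj := p.obj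
  map := p.map
  map_id x := by
    have hx : π.obj (s.obj x) = x := pobj hs x
    have hLo : ∀ X : E, L.obj X = p.obj (π.obj X) := fun X => pobj h.symm X
    have h1 : 𝟙 x = hc hx hx (π.map (𝟙 (s.obj x))) := by rw [π.map_id, hc_id]
    have hL : ∀ {X Y : E} (t : X ⟶ Y),
        p.map (π.map t) = hc (hLo X) (hLo Y) (L.map t) :=
      fun t => pcongr h.symm t
    rw [h1, map_hc, hL, L.map_id, hc_hc, hc_id]
  map_comp {x y z} f g := by
    have hLo : ∀ X : E, L.obj X = p.obj (π.obj X) := fun X => pobj h.symm X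
    have hso : ∀ x : C, π.obj (s.obj x) = x := fun x => pobj hs x
    have hL : ∀ {X Y : E} (t : X ⟶ Y),
        p.map (π.map t) = hc (hLo X) (hLo Y) (L.map t) :=
      fun t => pcongr h.symm t
    have hf : f = hc (hso x) (hso y) (π.map (s.map f)) := pcongr hs f
    have hg : g = hc (hso y) (hso z) (π.map (s.map g)) := pcongr hs g
    rw [hf, hg, comp_hc_hc, ← π.map_comp, map_hc, map_hc, map_hc, hL, hL, hL,
      hc_hc, hc_hc, hc_hc, L.map_comp]
    rw [comp_hc_hc]

/-! ### The groupoid structure coming from an Eilenberg–Moore algebra structure -/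

section AlgebraGroupoid

variable {V : Type u} [Quiver.{u} V] (a : Quiver.FreeGroupoid V ⥤q V)

/-- The multiplication of the free-groupoid monad. -/
abbrev muV : Quiver.FreeGroupoid (Quiver.FreeGroupoid V) ⥤ Quiver.FreeGroupoid V :=
  Quiver.FreeGroupoid.lift (𝟭q (Quiver.FreeGroupoid V))

/-- The free-groupoid functor applied to `a`. -/
abbrev Ta : Quiver.FreeGroupoid (Quiver.FreeGroupoid V) ⥤ Quiver.FreeGroupoid V :=
  Quiver.freeGroupoidFunctor a

variable (hunit : Quiver.FreeGroupoid.of V ⋙q a = 𝟭q V)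
  (hassoc : (Ta a).toPrefunctor ⋙q a = (muV (V := V)).toPrefunctor ⋙q a)

section key

include hunit in
lemma aObjOf (x : V) : a.obj ((Quiver.FreeGroupoid.of V).obj x) = x := pobj hunit x

variable {X Y Z : Quiver.FreeGroupoid V}

lemma l1 : Quiver.FreeGroupoid.of (Quiver.FreeGroupoid V) ⋙q (Ta a).toPrefunctor =
    a ⋙q Quiver.FreeGroupoid.of V := lift_spec _

lemma l2 : Quiver.FreeGroupoid.of (Quiver.FreeGroupoid V) ⋙q (muV (V := V)).toPrefunctor =
    𝟭q (Quiver.FreeGroupoid V) := lift_spec _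

lemma l1obj (X : Quiver.FreeGroupoid V) :
    (Ta a).obj ((Quiver.FreeGroupoid.of (Quiver.FreeGroupoid V)).obj X) = (Quiver.FreeGroupoid.of V).obj (a.obj X) := pobj (l1 a) X

lemma l2obj (P : Quiver.FreeGroupoid V) :
    (muV (V := V)).obj ((Quiver.FreeGroupoid.of (Quiver.FreeGroupoid V)).obj P) = P := pobj (l2 (V := V)) P

include hassoc in
lemma hAobj (P : Quiver.FreeGroupoid (Quiver.FreeGroupoid V)) :
    a.obj ((muV (V := V)).obj P) = a.obj ((Ta a).obj P) := pobj hassoc.symm P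

include hassoc in
lemma hA {P Q : Quiver.FreeGroupoid (Quiver.FreeGroupoid V)} (t : P ⟶ Q) :
    a.map ((Ta a).map t) =
      hc (hAobj a hassoc P) (hAobj a hassoc Q) (a.map ((muV (V := V)).map t)) :=
  pcongr hassoc.symm t

lemma hmu {P Q : Quiver.FreeGroupoid V} (t : P ⟶ Q) :
    (muV (V := V)).map ((Quiver.FreeGroupoid.of (Quiver.FreeGroupoid V)).map t) =
      hc (l2obj (V := V) P).symm (l2obj (V := V) Q).symm t :=
  hc_flip (pcongr (l2 (V := V)) t)

include hunit hassoc in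
lemma key_comp (u : X ⟶ Y) (v : Y ⟶ Z) :
    a.map ((Quiver.FreeGroupoid.of V).map (a.map u) ≫ (Quiver.FreeGroupoid.of V).map (a.map v)) =
      hc (aObjOf a hunit (a.obj X)).symm (aObjOf a hunit (a.obj Z)).symm
        (a.map (u ≫ v)) := by
  have hu : (Quiver.FreeGroupoid.of V).map (a.map u) =
      hc (l1obj a X) (l1obj a Y)
        ((Ta a).map ((Quiver.FreeGroupoid.of (Quiver.FreeGroupoid V)).map u)) := pcongr (l1 a) u
  have hv : (Quiver.FreeGroupoid.of V).map (a.map v) =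
      hc (l1obj a Y) (l1obj a Z)
        ((Ta a).map ((Quiver.FreeGroupoid.of (Quiver.FreeGroupoid V)).map v)) := pcongr (l1 a) v
  rw [hu, hv, comp_hc_hc, ← Functor.map_comp, map_hc, hA a hassoc, hc_hc,
    Functor.map_comp, hmu, hmu, comp_hc_hc, map_hc, hc_hc]

include hunit hassoc in
lemma key_id (X : Quiver.FreeGroupoid V) :
    a.map (𝟙 ((Quiver.FreeGroupoid.of V).obj (a.obj X))) =
      hc (aObjOf a hunit (a.obj X)).symm (aObjOf a hunit (a.obj X)).symm
        (a.map (𝟙 X)) := by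
  have h0 : 𝟙 ((Quiver.FreeGroupoid.of V).obj (a.obj X)) =
      hc (l1obj a X) (l1obj a X)
        ((Ta a).map (𝟙 ((Quiver.FreeGroupoid.of (Quiver.FreeGroupoid V)).obj X))) := by
    rw [CategoryTheory.Functor.map_id]; exact (hc_id _).symm
  have h1 : (𝟙 ((muV (V := V)).obj ((Quiver.FreeGroupoid.of (Quiver.FreeGroupoid V)).obj X)) :
      _ ⟶ _) = hc (l2obj (V := V) X).symm (l2obj (V := V) X).symm (𝟙 X) :=
    (hc_id _).symm
  rw [h0, map_hc, hA a hassoc, hc_hc, CategoryTheory.Functor.map_id, h1, map_hc, hc_hc]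

include hunit hassoc in
lemma key_inv (u : X ⟶ Y) :
    a.map (Groupoid.inv ((Quiver.FreeGroupoid.of V).map (a.map u))) =
      hc (aObjOf a hunit (a.obj Y)).symm (aObjOf a hunit (a.obj X)).symm
        (a.map (Groupoid.inv u)) := by
  have hu : (Quiver.FreeGroupoid.of V).map (a.map u) =
      hc (l1obj a X) (l1obj a Y)
        ((Ta a).map ((Quiver.FreeGroupoid.of (Quiver.FreeGroupoid V)).map u)) := pcongr (l1 a) u
  rw [hu, inv_hc, ← map_ginv (Ta a), map_hc, hA a hassoc, hc_hc,
    map_ginv (muV (V := V)), hmu, inv_hc, map_hc, hc_hc]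

end key

/-- The category structure on `V` induced by the algebra structure `a`. -/
@[reducible]
def algCatStruct : CategoryStruct V where
  toQuiver := inferInstance
  id x := hc (aObjOf a hunit x) (aObjOf a hunit x)
    (a.map (𝟙 ((Quiver.FreeGroupoid.of V).obj x)))
  comp {x y z} f g := hc (aObjOf a hunit x) (aObjOf a hunit z)
    (a.map ((Quiver.FreeGroupoid.of V).map f ≫ (Quiver.FreeGroupoid.of V).map g))

include hassoc in
lemma comp_formula {X Y Z : Quiver.FreeGroupoid V} (u : X ⟶ Y) (v : Y ⟶ Z) {x y z : V}
    (hX : a.obj X = x) (hY : a.obj Y = y) (hZ : a.obj Z = z) :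
    (algCatStruct a hunit).comp (hc hX hY (a.map u)) (hc hY hZ (a.map v)) =
      hc hX hZ (a.map (u ≫ v)) := by
  subst hX; subst hY; subst hZ
  show hc _ _ (a.map ((Quiver.FreeGroupoid.of V).map (hc rfl rfl (a.map u)) ≫
      (Quiver.FreeGroupoid.of V).map (hc rfl rfl (a.map v)))) = _
  rw [hc_self, hc_self, key_comp a hunit hassoc, hc_hc]

include hassoc in
lemma id_formula {X : Quiver.FreeGroupoid V} {x : V} (hX : a.obj X = x) :
    (algCatStruct a hunit).id x = hc hX hX (a.map (𝟙 X)) := by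
  subst hX
  show hc _ _ (a.map (𝟙 ((Quiver.FreeGroupoid.of V).obj (a.obj X)))) = _
  rw [key_id a hunit hassoc, hc_hc]

include hunit hassoc in
lemma surj_formula {x y : V} (f : x ⟶ y) :
    f = hc (aObjOf a hunit x) (aObjOf a hunit y)
      (a.map ((Quiver.FreeGroupoid.of V).map f)) := pcongr hunit f

/-- The groupoid structure on `V` induced by the algebra structure `a`. -/
def algGroupoid : Groupoid V where
  toCategoryStruct := algCatStruct a hunit
  id_comp {x y} f := by
    rw [surj_formula a hunit hassoc f,
      id_formula a hunit hassoc (aObjOf a hunit x),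
      comp_formula a hunit hassoc]
    rw [Category.id_comp]
  comp_id {x y} f := by
    rw [surj_formula a hunit hassoc f,
      id_formula a hunit hassoc (aObjOf a hunit y),
      comp_formula a hunit hassoc]
    rw [Category.comp_id]
  assoc {w x y z} f g h := by
    rw [surj_formula a hunit hassoc f, surj_formula a hunit hassoc g,
      surj_formula a hunit hassoc h, comp_formula a hunit hassoc,
      comp_formula a hunit hassoc, comp_formula a hunit hassoc,
      comp_formula a hunit hassoc]
    rw [Category.assoc]
  inv {x y} f := hc (aObjOf a hunit y) (aObjOf a hunit x)
    (a.map (Groupoid.inv ((Quiver.FreeGroupoid.of V).map f)))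
  inv_comp {x y} f := by
    show (algCatStruct a hunit).comp
        (hc (aObjOf a hunit y) (aObjOf a hunit x)
          (a.map (Groupoid.inv ((Quiver.FreeGroupoid.of V).map f)))) f =
      (algCatStruct a hunit).id y
    rw [surj_formula a hunit hassoc f]
    simp only [map_hc, inv_hc, hc_hc, key_inv a hunit hassoc]
    rw [comp_formula a hunit hassoc, Groupoid.inv_comp,
      id_formula a hunit hassoc (aObjOf a hunit y)]
  comp_inv {x y} f := by
    show (algCatStruct a hunit).comp f
        (hc (aObjOf a hunit y) (aObjOf a hunit x)
          (a.map (Groupoid.inv ((Quiver.FreeGroupoid.of V).map f)))) =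
      (algCatStruct a hunit).id x
    rw [surj_formula a hunit hassoc f]
    simp only [map_hc, inv_hc, hc_hc, key_inv a hunit hassoc]
    rw [comp_formula a hunit hassoc, Groupoid.comp_inv,
      id_formula a hunit hassoc (aObjOf a hunit x)]

/-- `a` itself is functorial for the induced groupoid structure. -/
def aFunctor : letI := algGroupoid a hunit hassoc; Quiver.FreeGroupoid V ⥤ V :=
  letI := algGroupoid a hunit hassoc
  { obj := a.obj
    map := a.map
    map_id := fun X => by
      show a.map (𝟙 X) = (algCatStruct a hunit).id (a.obj X)
      rw [id_formula a hunit hassoc rfl, hc_self]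
    map_comp := fun u v => by
      show a.map (u ≫ v) = (algCatStruct a hunit).comp (a.map u) (a.map v)
      rw [show a.map u = hc rfl rfl (a.map u) from rfl,
        show a.map v = hc rfl rfl (a.map v) from rfl,
        comp_formula a hunit hassoc, hc_self] }

lemma aFunctor_eq_lift :
    letI := algGroupoid a hunit hassoc
    Quiver.FreeGroupoid.lift (𝟭q V) = aFunctor a hunit hassoc :=
  letI := algGroupoid a hunit hassoc
  (lift_unique (𝟭q V) (aFunctor a hunit hassoc) hunit).symm

end AlgebraGroupoid

/-! ### The free–forgetful adjunction between `Quiv` and `Grpd` -/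

/-- The forgetful functor from groupoids to quivers. -/
abbrev U : Grpd.{u, u} ⥤ Quiv.{u, u} := Grpd.forgetToCat.{u, u} ⋙ Quiv.forget.{u, u}

instance (G : Grpd.{u, u}) : Groupoid ((U.obj G : Quiv.{u, u}) : Type u) := G.str'

/-- The free groupoid functor from quivers to groupoids. -/
def freeFunctor : Quiv.{u, u} ⥤ Grpd.{u, u} where
  obj V := Grpd.of (Quiver.FreeGroupoid V)
  map φ := Quiver.freeGroupoidFunctor φ
  map_id _ := Quiver.freeGroupoidFunctor_id
  map_comp φ ψ := Quiver.freeGroupoidFunctor_comp φ ψ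

/-- The free groupoid adjunction. -/
def adj : freeFunctor.{u} ⊣ U.{u} :=
  Adjunction.mkOfHomEquiv
    { homEquiv := fun V G =>
        { toFun := fun F => Quiver.FreeGroupoid.of V ⋙q F.toPrefunctor
          invFun := fun φ => Quiver.FreeGroupoid.lift φ
          left_inv := fun F => (lift_unique _ F rfl).symm
          right_inv := fun φ => lift_spec φ }
      homEquiv_naturality_left_symm := fun {V V' G} f g => by
        dsimp
        symm
        apply lift_unique
        show (Quiver.FreeGroupoid.of V ⋙q (Quiver.freeGroupoidFunctor f).toPrefunctor) ⋙q
          (Quiver.FreeGroupoid.lift g).toPrefunctor = f ≫ g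
        exact (congrArg (fun F => F ⋙q (Quiver.FreeGroupoid.lift g).toPrefunctor)
          (lift_spec (f ⋙q Quiver.FreeGroupoid.of V'))).trans (congrArg (fun F => f ⋙q F) (lift_spec g)) }

/-- The forgetful functor is faithful. -/
instance : U.{u}.Faithful where
  map_injective {G H} F F' h := by
    exact Functor.toPrefunctor_injective h

lemma counit_app_eq (G : Grpd.{u, u}) :
    adj.counit.app G = (Quiver.FreeGroupoid.lift (𝟭q ((U.{u}).obj G)) : _ ⥤ _) := rfl

instance : (Monad.comparison adj.{u}).Full where
  map_surjective {G H} φ := by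
    have h : (Quiver.FreeGroupoid.lift (𝟭q ((U.{u}).obj G))).toPrefunctor ⋙q φ.f =
        (Quiver.freeGroupoidFunctor φ.f ⋙ Quiver.FreeGroupoid.lift (𝟭q ((U.{u}).obj H))).toPrefunctor :=
      φ.h.symm
    refine ⟨functorOfSection (Quiver.FreeGroupoid.lift (𝟭q ((U.{u}).obj G))) (Quiver.FreeGroupoid.of _)
      (lift_spec _) φ.f (Quiver.freeGroupoidFunctor φ.f ⋙ Quiver.FreeGroupoid.lift (𝟭q ((U.{u}).obj H))) h, ?_⟩
    apply Monad.Algebra.Hom.ext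
    rfl

instance : (Monad.comparison adj.{u}).EssSurj where
  mem_essImage A := by
    letI V : Type u := (A.A : Type u)
    letI a : Quiver.FreeGroupoid V ⥤q V := A.a
    have hunit : Quiver.FreeGroupoid.of V ⋙q a = 𝟭q V := A.unit
    have hassoc : (Ta a).toPrefunctor ⋙q a = (muV (V := V)).toPrefunctor ⋙q a :=
      A.assoc.symm
    letI instG : Groupoid V := algGroupoid a hunit hassoc
    refine ⟨Grpd.of V, ⟨Monad.Algebra.isoMk (Iso.refl _) ?_⟩⟩
    show _ ≫ A.a = _ ≫ _
    erw [Iso.refl_hom, CategoryTheory.Functor.map_id, Category.id_comp, Category.comp_id]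
    show a = (Quiver.FreeGroupoid.lift (𝟭q V)).toPrefunctor
    rw [aFunctor_eq_lift a hunit hassoc]
    rfl

instance : (Monad.comparison adj.{u}).IsEquivalence where

end GrpdMonadic

open GrpdMonadic in
theorem grpd_forget_to_quiv_monadic :
    (Grpd.forgetToCat.{u, u} ⋙ Quiv.forget.{u, u}).IsRightAdjoint ∧
      Nonempty (MonadicRightAdjoint (Grpd.forgetToCat.{u, u} ⋙ Quiv.forget.{u, u})) :=
  ⟨⟨freeFunctor, ⟨adj⟩⟩, ⟨{ L := freeFunctor, adj := adj, eqv := inferInstance }⟩⟩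
end
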